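/- arXiv:1910.04078 — 10 statements merged into one kernel-verified Lean document; each statement's English description precedes it below -/
import Mathlib

section
/- Let m > 1 be real, let a, b : ℝ → ℝ, and let w, v : ℝ → ℝ be twice differentiable functions with w(x) > 0 for all x, satisfying w'' + a·w' + b·w = 0 and v'' + a·v' + b·v = 0 on ℝ, and suppose the Wronskian W = w·v' − w'·v is nonvanishing on ℝ. Let T > 0 and let u : ℝ × (0,T) → (0,∞) be differentiable in t and such that x ↦ u(x,t)^m is twice differentiable in x for each t. Then for each (x,t) ∈ ℝ × (0,T), the equation u_t = (u^m)_{xx} + a(x)(u^m)_x + b(x)u^m holds at (x,t) if and only if the identity (w(x)³/W(x)²)·u_t(x,t) = (w(x)²/W(x))·∂_x[ (w(x)²/W(x))·∂_x( u(x,t)^m / w(x) ) ] holds at (x,t). -/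
open Real Set

/-- Equivalence between the reaction-convection-diffusion equation
`u_t = (u^m)_{xx} + a(x)(u^m)_x + b(x)u^m` and the factorized form
`(w³/W²) u_t = (w²/W) ∂_x[(w²/W) ∂_x(u^m/w)]`, where `w, v` are two solutions of
the stationary ODE `σ'' + a σ' + b σ = 0` with nonvanishing Wronskian `W`. -/
theorem stmt0
    (m : ℝ) (hm : 1 < m)
    (a b : ℝ → ℝ)
    (w v : ℝ → ℝ)
    (hw : Differentiable ℝ w) (hw' : Differentiable ℝ (deriv w))
    (hv : Differentiable ℝ v) (hv' : Differentiable ℝ (deriv v))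
    (hwpos : ∀ x : ℝ, 0 < w x)
    (hwode : ∀ x : ℝ, deriv (deriv w) x + a x * deriv w x + b x * w x = 0)
    (hvode : ∀ x : ℝ, deriv (deriv v) x + a x * deriv v x + b x * v x = 0)
    (W : ℝ → ℝ) (hW : ∀ x : ℝ, W x = w x * deriv v x - deriv w x * v x)
    (hWne : ∀ x : ℝ, W x ≠ 0)
    (T : ℝ) (hT : 0 < T)
    (u : ℝ → ℝ → ℝ)
    (hupos : ∀ x t, t ∈ Ioo 0 T → 0 < u x t)
    (hut : ∀ x t, t ∈ Ioo 0 T → DifferentiableAt ℝ (fun s => u x s) t)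
    (hux : ∀ t, t ∈ Ioo 0 T → Differentiable ℝ (fun z => u z t ^ m))
    (huxx : ∀ t, t ∈ Ioo 0 T → Differentiable ℝ (deriv (fun z => u z t ^ m)))
    (x t : ℝ) (ht : t ∈ Ioo 0 T) :
    deriv (fun s => u x s) t =
        deriv (deriv (fun z => u z t ^ m)) x
          + a x * deriv (fun z => u z t ^ m) x + b x * u x t ^ m
    ↔
    (w x ^ 3 / W x ^ 2) * deriv (fun s => u x s) t =
        (w x ^ 2 / W x) *
          deriv (fun z => (w z ^ 2 / W z) * deriv (fun z' => u z' t ^ m / w z') z) x := by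
  set f := fun z => u z t ^ m with hfdef
  have hf : Differentiable ℝ f := hux t ht
  have hf' : Differentiable ℝ (deriv f) := huxx t ht
  have hWfun : W = fun x => w x * deriv v x - deriv w x * v x := funext hW
  have hWdiff : Differentiable ℝ W := by
    rw [hWfun]; exact (hw.mul hv').sub (hw'.mul hv)
  have hWderiv : ∀ z, deriv W z = - a z * W z := by
    intro z
    have h0 : deriv W z = (deriv w z * deriv v z + w z * deriv (deriv v) z)
        - (deriv (deriv w) z * v z + deriv w z * deriv v z) := by
      conv_lhs => rw [hWfun]
      rw [deriv_fun_sub (f := fun y => w y * deriv v y) (g := fun y => deriv w y * v y) ((hw z).mul (hv' z)) ((hw' z).mul (hv z)),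
          deriv_fun_mul (hw z) (hv' z), deriv_fun_mul (hw' z) (hv z)]
    have hv2 : deriv (deriv v) z = -(a z * deriv v z + b z * v z) := by
      linarith [hvode z]
    have hw2 : deriv (deriv w) z = -(a z * deriv w z + b z * w z) := by
      linarith [hwode z]
    rw [h0, hv2, hw2, hW z]; ring
  have hinner : ∀ z, deriv (fun z' => f z' / w z') z
      = (deriv f z * w z - f z * deriv w z) / w z ^ 2 :=
    fun z => deriv_div (hf z) (hw z) (hwpos z).ne'
  have hg : (fun z => (w z ^ 2 / W z) * deriv (fun z' => u z' t ^ m / w z') z)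
      = fun z => (deriv f z * w z - f z * deriv w z) / W z := by
    funext z
    have : (fun z' => u z' t ^ m / w z') = fun z' => f z' / w z' := rfl
    rw [this, hinner z]
    have hwz : w z ≠ 0 := (hwpos z).ne'
    rw [div_mul_div_comm, mul_comm (W z) (w z ^ 2),
        mul_div_mul_left _ _ (pow_ne_zero 2 hwz)]
  rw [hg]
  have hnum : Differentiable ℝ (fun z => deriv f z * w z - f z * deriv w z) :=
    (hf'.mul hw).sub (hf.mul hw')
  have hD : deriv (fun z => (deriv f z * w z - f z * deriv w z) / W z) x
      = ((deriv (deriv f) x * w x + deriv f x * deriv w x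
          - (deriv f x * deriv w x + f x * deriv (deriv w) x)) * W x
        - (deriv f x * w x - f x * deriv w x) * deriv W x) / W x ^ 2 := by
    rw [deriv_fun_div (hnum x) (hWdiff x) (hWne x),
        deriv_fun_sub (f := fun y => deriv f y * w y) (g := fun y => f y * deriv w y) ((hf' x).mul (hw x)) ((hf x).mul (hw' x)),
        deriv_fun_mul (hf' x) (hw x), deriv_fun_mul (hf x) (hw' x)]
  have hw2x : deriv (deriv w) x = -(a x * deriv w x + b x * w x) := by
    linarith [hwode x]
  have hRHS : (w x ^ 2 / W x) *
      deriv (fun z => (deriv f z * w z - f z * deriv w z) / W z) x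
      = (w x ^ 3 / W x ^ 2) *
        (deriv (deriv f) x + a x * deriv f x + b x * f x) := by
    rw [hD, hWderiv x, hw2x]
    have hwx : w x ≠ 0 := (hwpos x).ne'
    have hWx : W x ≠ 0 := hWne x
    field_simp
    ring
  rw [hRHS]
  have hfx : f x = u x t ^ m := rfl
  have hc : (w x ^ 3 / W x ^ 2) ≠ 0 := by
    have hwx : w x ≠ 0 := (hwpos x).ne'
    have hWx : W x ≠ 0 := hWne x
    positivity
  rw [hfx]
  exact (mul_right_inj' hc).symm
end

section
/- Let m > 1 be real, let a, b : ℝ → ℝ, and let w, v : ℝ → ℝ be twice differentiable with w > 0 on ℝ, satisfying w'' + a·w' + b·w = 0 and v'' + a·v' + b·v = 0, with Wronskian W = w·v' − w'·v strictly positive on ℝ. Let Y(x) = v(x)/w(x) (which is strictly increasing since Y' = W/w² > 0), let J = Y(ℝ) be its image and h : J → ℝ the inverse of Y. If u : ℝ × (0,T) → (0,∞) is a classical solution of u_t = (u^m)_{xx} + a(x)(u^m)_x + b(x)u^m on ℝ × (0,T), then θ : J × (0,T) → (0,∞) defined by θ(y,t) = u(h(y),t) / w(h(y))^{1/m} is differentiable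 in t, the map y ↦ θ(y,t)^m is twice differentiable in y, and θ satisfies f(y)·θ_t = (θ^m)_{yy} pointwise on J × (0,T), where f(y) = w(h(y))^{(3m+1)/m} / W(h(y))². -/
open Real Set

/-- the transformation `θ(y,t) = u(h(y),t)/w(h(y))^{1/m}`, `y = v(x)/w(x)`,
maps classical solutions of `u_t = (u^m)_{xx} + a(x)(u^m)_x + b(x)u^m` on `ℝ × (0,T)`
to classical solutions of `f(y) θ_t = (θ^m)_{yy}` on `J × (0,T)`, where `J` is the range
of `Y = v/w`, `h` its inverse and `f(y) = w(h(y))^{(3m+1)/m} / W(h(y))²`. -/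
theorem stmt1
    (m : ℝ) (hm : 1 < m)
    (a b : ℝ → ℝ)
    (w v : ℝ → ℝ)
    (hw : Differentiable ℝ w) (hw' : Differentiable ℝ (deriv w))
    (hv : Differentiable ℝ v) (hv' : Differentiable ℝ (deriv v))
    (hwpos : ∀ x : ℝ, 0 < w x)
    (hwode : ∀ x : ℝ, deriv (deriv w) x + a x * deriv w x + b x * w x = 0)
    (hvode : ∀ x : ℝ, deriv (deriv v) x + a x * deriv v x + b x * v x = 0)
    (W : ℝ → ℝ) (hW : ∀ x : ℝ, W x = w x * deriv v x - deriv w x * v x)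
    (hWpos : ∀ x : ℝ, 0 < W x)
    (Y : ℝ → ℝ) (hY : ∀ x : ℝ, Y x = v x / w x)
    (J : Set ℝ) (hJ : J = range Y)
    (h : ℝ → ℝ) (hinv : ∀ x : ℝ, h (Y x) = x)
    (T : ℝ) (hT : 0 < T)
    (u : ℝ → ℝ → ℝ)
    (hupos : ∀ x t, t ∈ Ioo 0 T → 0 < u x t)
    (hut : ∀ x t, t ∈ Ioo 0 T → DifferentiableAt ℝ (fun s => u x s) t)
    (hux : ∀ t, t ∈ Ioo 0 T → Differentiable ℝ (fun z => u z t ^ m))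
    (huxx : ∀ t, t ∈ Ioo 0 T → Differentiable ℝ (deriv (fun z => u z t ^ m)))
    (hpde : ∀ x t, t ∈ Ioo 0 T →
      deriv (fun s => u x s) t =
        deriv (deriv (fun z => u z t ^ m)) x
          + a x * deriv (fun z => u z t ^ m) x + b x * u x t ^ m)
    (θ : ℝ → ℝ → ℝ)
    (hθ : ∀ y t : ℝ, θ y t = u (h y) t / (w (h y)) ^ (1/m))
    (f : ℝ → ℝ)
    (hf : ∀ y : ℝ, f y = (w (h y)) ^ ((3*m+1)/m) / (W (h y)) ^ 2) :
    ∀ y ∈ J, ∀ t ∈ Ioo 0 T,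
      0 < θ y t ∧
      DifferentiableAt ℝ (fun s => θ y s) t ∧
      DifferentiableAt ℝ (fun z => θ z t ^ m) y ∧
      DifferentiableAt ℝ (deriv (fun z => θ z t ^ m)) y ∧
      f y * deriv (fun s => θ y s) t = deriv (deriv (fun z => θ z t ^ m)) y := by
  have hwne : ∀ x, w x ≠ 0 := fun x => (hwpos x).ne'
  have hWne : ∀ x, W x ≠ 0 := fun x => (hWpos x).ne'
  have hm0 : m ≠ 0 := by linarith
  -- derivative of Y
  have hYd : ∀ x, HasDerivAt Y (W x / (w x) ^ 2) x := by
    intro x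
    have h1 : HasDerivAt v (deriv v x) x := (hv x).hasDerivAt
    have h2 : HasDerivAt w (deriv w x) x := (hw x).hasDerivAt
    have h3 := h1.div h2 (hwne x)
    have hfun : Y = fun x => v x / w x := funext hY
    rw [hfun]
    exact h3.congr_deriv (by rw [hW]; ring)
  have hY'pos : ∀ x, 0 < W x / (w x) ^ 2 := fun x => div_pos (hWpos x) (pow_pos (hwpos x) 2)
  have smono : StrictMono Y :=
    strictMono_of_deriv_pos (fun x => by rw [(hYd x).deriv]; exact hY'pos x)
  have hYcont : Continuous Y :=
    Differentiable.continuous (fun x => (hYd x).differentiableAt)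
  have hYh : ∀ y ∈ J, Y (h y) = y := by
    intro y hy; rw [hJ] at hy; obtain ⟨x, rfl⟩ := hy; rw [hinv]
  have hJopen : IsOpen J := by
    rw [isOpen_iff_mem_nhds]
    intro y hy
    rw [hJ] at hy; obtain ⟨x, rfl⟩ := hy
    have hsub : Ioo (Y (x - 1)) (Y (x + 1)) ⊆ J := by
      rw [hJ]
      intro z hz
      obtain ⟨c, _, rfl⟩ :=
        intermediate_value_Ioo (by linarith : x - 1 ≤ x + 1) hYcont.continuousOn hz
      exact mem_range_self c
    exact Filter.mem_of_superset
      (Ioo_mem_nhds (smono (by linarith)) (smono (by linarith))) hsub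
  have hhmono : StrictMonoOn h J := by
    intro y1 hy1 y2 hy2 hlt
    rw [hJ] at hy1 hy2
    obtain ⟨x1, rfl⟩ := hy1; obtain ⟨x2, rfl⟩ := hy2
    rw [hinv, hinv]; exact smono.lt_iff_lt.mp hlt
  have hhcont : ∀ y ∈ J, ContinuousAt h y := by
    intro y hy
    apply hhmono.continuousAt_of_image_mem_nhds (hJopen.mem_nhds hy)
    have himg : h '' J = univ := by
      apply eq_univ_of_forall
      intro x
      exact ⟨Y x, by rw [hJ]; exact mem_range_self x, hinv x⟩
    rw [himg]; exact Filter.univ_mem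
  have hhd : ∀ y ∈ J, HasDerivAt h ((w (h y)) ^ 2 / W (h y)) y := by
    intro y hy
    have key : HasDerivAt h (W (h y) / (w (h y)) ^ 2)⁻¹ y := by
      apply HasDerivAt.of_local_left_inverse (hhcont y hy) (hYd (h y)) (hY'pos (h y)).ne'
      filter_upwards [hJopen.mem_nhds hy] with z hz using hYh z hz
    convert key using 1
    rw [inv_div]
  -- main part
  intro y hy t ht
  have hwrp : ∀ x, (0:ℝ) < w x ^ (1/m) := fun x => Real.rpow_pos_of_pos (hwpos x) _
  have hθpos : 0 < θ y t := by rw [hθ]; exact div_pos (hupos _ t ht) (hwrp _)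
  -- time derivative
  have hθt : HasDerivAt (fun s => θ y s) (deriv (fun s => u (h y) s) t / w (h y) ^ (1/m)) t := by
    have e : (fun s => θ y s) = fun s => u (h y) s / w (h y) ^ (1/m) :=
      funext fun s => hθ y s
    rw [e]
    exact (hut (h y) t ht).hasDerivAt.div_const _
  -- spatial: θ^m = g ∘ h / w ∘ h
  have hg := hux t ht
  have hg' := huxx t ht
  have Feq : ∀ z : ℝ, θ z t ^ m = (u (h z) t ^ m) / w (h z) := by
    intro z
    rw [hθ, Real.div_rpow (hupos _ t ht).le (Real.rpow_nonneg (hwpos _).le _),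
      ← Real.rpow_mul (hwpos _).le, one_div_mul_cancel hm0, Real.rpow_one]
  have hFd : ∀ y' ∈ J, HasDerivAt (fun z => θ z t ^ m)
      ((deriv (fun z => u z t ^ m) (h y') * w (h y')
        - u (h y') t ^ m * deriv w (h y')) / W (h y')) y' := by
    intro y' hy'
    have A : HasDerivAt (fun x => u x t ^ m / w x)
        ((deriv (fun z => u z t ^ m) (h y') * w (h y')
          - u (h y') t ^ m * deriv w (h y')) / (w (h y')) ^ 2) (h y') :=
      (hg (h y')).hasDerivAt.div (hw (h y')).hasDerivAt (hwne (h y'))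
    have B := A.comp y' (hhd y' hy')
    have e : (fun z => θ z t ^ m) = fun z => u (h z) t ^ m / w (h z) := funext Feq
    rw [e]
    exact B.congr_deriv (by field_simp [hwne, hWne])
  have derivFeq : ∀ y' ∈ J, deriv (fun z => θ z t ^ m) y'
      = (deriv (fun z => u z t ^ m) (h y') * w (h y')
        - u (h y') t ^ m * deriv w (h y')) / W (h y') := fun y' hy' => (hFd y' hy').deriv
  -- derivative of G at x₀
  set x₀ := h y with hx₀
  have hWd : HasDerivAt W (w x₀ * deriv (deriv v) x₀ - deriv (deriv w) x₀ * v x₀) x₀ := by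
    have e : W = fun x => w x * deriv v x - deriv w x * v x := funext hW
    rw [e]
    have := ((hw x₀).hasDerivAt.mul (hv' x₀).hasDerivAt).sub
      ((hw' x₀).hasDerivAt.mul (hv x₀).hasDerivAt)
    exact this.congr_deriv (by ring)
  have hNd : HasDerivAt (fun x => deriv (fun z => u z t ^ m) x * w x - u x t ^ m * deriv w x)
      (deriv (deriv (fun z => u z t ^ m)) x₀ * w x₀ - u x₀ t ^ m * deriv (deriv w) x₀) x₀ := by
    have := ((hg' x₀).hasDerivAt.mul (hw x₀).hasDerivAt).sub
      ((hg x₀).hasDerivAt.mul (hw' x₀).hasDerivAt)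
    exact this.congr_deriv (by ring)
  have hGd : HasDerivAt (fun x => (deriv (fun z => u z t ^ m) x * w x - u x t ^ m * deriv w x) / W x)
      (((deriv (deriv (fun z => u z t ^ m)) x₀ * w x₀ - u x₀ t ^ m * deriv (deriv w) x₀) * W x₀
        - (deriv (fun z => u z t ^ m) x₀ * w x₀ - u x₀ t ^ m * deriv w x₀)
          * (w x₀ * deriv (deriv v) x₀ - deriv (deriv w) x₀ * v x₀)) / (W x₀) ^ 2) x₀ :=
    hNd.div hWd (hWne x₀)
  have hGh : HasDerivAt (fun y' => (deriv (fun z => u z t ^ m) (h y') * w (h y')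
        - u (h y') t ^ m * deriv w (h y')) / W (h y'))
      ((((deriv (deriv (fun z => u z t ^ m)) x₀ * w x₀ - u x₀ t ^ m * deriv (deriv w) x₀) * W x₀
        - (deriv (fun z => u z t ^ m) x₀ * w x₀ - u x₀ t ^ m * deriv w x₀)
          * (w x₀ * deriv (deriv v) x₀ - deriv (deriv w) x₀ * v x₀)) / (W x₀) ^ 2)
        * ((w x₀) ^ 2 / W x₀)) y := hGd.comp y (hhd y hy)
  have hEv : deriv (fun z => θ z t ^ m) =ᶠ[nhds y]
      (fun y' => (deriv (fun z => u z t ^ m) (h y') * w (h y')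
        - u (h y') t ^ m * deriv w (h y')) / W (h y')) := by
    filter_upwards [hJopen.mem_nhds hy] with z hz using derivFeq z hz
  have hDD : DifferentiableAt ℝ (deriv (fun z => θ z t ^ m)) y :=
    hGh.differentiableAt.congr_of_eventuallyEq hEv
  have hderiv2 : deriv (deriv (fun z => θ z t ^ m)) y =
      (((deriv (deriv (fun z => u z t ^ m)) x₀ * w x₀ - u x₀ t ^ m * deriv (deriv w) x₀) * W x₀
        - (deriv (fun z => u z t ^ m) x₀ * w x₀ - u x₀ t ^ m * deriv w x₀)
          * (w x₀ * deriv (deriv v) x₀ - deriv (deriv w) x₀ * v x₀)) / (W x₀) ^ 2)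
        * ((w x₀) ^ 2 / W x₀) := by
    rw [hEv.deriv_eq]
    exact hGh.deriv
  refine ⟨hθpos, hθt.differentiableAt, (hFd y hy).differentiableAt, hDD, ?_⟩
  rw [hderiv2, hθt.deriv, hf]
  -- algebra
  have e1 : deriv (deriv w) x₀ = -(a x₀ * deriv w x₀ + b x₀ * w x₀) := by
    have := hwode x₀; linarith
  have e2 : deriv (deriv v) x₀ = -(a x₀ * deriv v x₀ + b x₀ * v x₀) := by
    have := hvode x₀; linarith
  have e3 : deriv (deriv (fun z => u z t ^ m)) x₀ =
      deriv (fun s => u x₀ s) t - a x₀ * deriv (fun z => u z t ^ m) x₀ - b x₀ * u x₀ t ^ m := by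
    have := hpde x₀ t ht; linarith
  have e4 : W x₀ = w x₀ * deriv v x₀ - deriv w x₀ * v x₀ := hW x₀
  have e5 : w x₀ ^ ((3*m+1)/m) = w x₀ ^ (1/m) * (w x₀ * w x₀ * w x₀) := by
    have hq : (3*m+1)/m = 1/m + ((3:ℕ):ℝ) := by field_simp; ring
    rw [hq, Real.rpow_add (hwpos x₀), Real.rpow_natCast]
    ring
  have hne : w x₀ * deriv v x₀ - deriv w x₀ * v x₀ ≠ 0 := by rw [← hW x₀]; exact hWne x₀
  rw [e3, e1, e2, e5, e4]
  field_simp [hne, (hwrp x₀).ne', (Real.rpow_pos_of_pos (hwpos x₀) m⁻¹).ne']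
  ring
end

section
/- Let m > 1, 0 < K < 1/4, and set λ₁ = (−1 − √(1−4K))/2, λ₂ = (−1 + √(1−4K))/2, λ = λ₂ − λ₁ = √(1−4K). Let u : ℝ × (0,T) → (0,∞) be a classical solution of u_t = (u^m)_{xx} + (u^m)_x + K·u^m. Define θ : (0,∞) × (0,λ²T) → (0,∞) by θ(y,τ) = y^{−λ₁/(mλ)} · u( (ln y)/λ , τ/λ² ). Then θ is a classical solution of y^{−γ} θ_τ = (θ^m)_{yy} on (0,∞) × (0,λ²T), where γ = (1/2)·[ (3m+1)/m − (m−1)/(m√(1−4K)) ]. -/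
/-!
Write `w = u(·, τ/λ²)^m` and `β = -λ₁/λ`, so that `θ^m = y^β w(log y / λ)`. Differentiating
`y^β w(log y / λ)` twice in `y` gives `y^(β-2) (β(β-1) w + (2β-1)/λ w' + w''/λ²)`, and since `λ₁` is a
root of `λ² + λ + K`, `β(β-1) = K/λ²` and `(2β-1)/λ = 1/λ²`: the bracket is `λ⁻²` times the right-hand
side of the equation for `u`, i.e. `λ⁻² u_t = θ_τ y^(-β/m)`. The weight `y^(-γ)` is exactly the
power `y^(β-2-β/m)` that remains.
-/

open Real Set Filter Topology

theorem hasDerivAt_rpow_mul_comp_log_div {β l z : ℝ} {w : ℝ → ℝ} (hz : 0 < z)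
    (hw : DifferentiableAt ℝ w (log z / l)) :
    HasDerivAt (fun t => t ^ β * w (log t / l))
      (z ^ (β - 1) * (β * w (log z / l) + deriv w (log z / l) / l)) z := by
  have hlog : HasDerivAt (fun t => log t / l) (z⁻¹ / l) z :=
    (hasDerivAt_log hz.ne').div_const l
  refine ((hasDerivAt_rpow_const (Or.inl hz.ne')).mul (hw.hasDerivAt.comp z hlog)).congr_deriv ?_
  rw [rpow_sub_one hz.ne', Function.comp_apply]
  field_simp

theorem hasDerivAt_deriv_rpow_mul_comp_log_div {β l y : ℝ} {w : ℝ → ℝ} (hy : 0 < y)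
    (hw : Differentiable ℝ w) (hw' : DifferentiableAt ℝ (deriv w) (log y / l)) :
    HasDerivAt (deriv fun t => t ^ β * w (log t / l))
      (y ^ (β - 2) * (β * (β - 1) * w (log y / l) + (2 * β - 1) / l * deriv w (log y / l)
        + deriv (deriv w) (log y / l) / l ^ 2)) y := by
  set v : ℝ → ℝ := fun x => β * w x + deriv w x / l
  have hderiv : (deriv fun t => t ^ β * w (log t / l)) =ᶠ[𝓝 y]
      fun t => t ^ (β - 1) * v (log t / l) := by
    filter_upwards [Ioi_mem_nhds hy] with t ht
    exact (hasDerivAt_rpow_mul_comp_log_div ht (hw _)).deriv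
  have hv : HasDerivAt v (β * deriv w (log y / l) + deriv (deriv w) (log y / l) / l)
      (log y / l) :=
    ((hw _).hasDerivAt.const_mul β).add (hw'.hasDerivAt.div_const l)
  refine ((hasDerivAt_rpow_mul_comp_log_div hy hv.differentiableAt).congr_of_eventuallyEq
    hderiv).congr_deriv ?_
  rw [hv.deriv, show β - 2 = β - 1 - 1 by ring]
  field_simp
  ring

theorem exponent_coeffs_of_sq_eq {K l β : ℝ} (hl : l ≠ 0) (hl2 : l ^ 2 = 1 - 4 * K)
    (hβ : β = (1 + l) / (2 * l)) :
    β * (β - 1) = K / l ^ 2 ∧ (2 * β - 1) / l = 1 / l ^ 2 := by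
  subst hβ
  constructor
  · field_simp
    linear_combination -hl2
  · field_simp
    ring

theorem stmt2_general
    (m K : ℝ) (hm : 1 < m) (hK : K < 1/4)
    (l₁ l₂ l : ℝ)
    (hl₁ : l₁ = (-1 - Real.sqrt (1 - 4*K)) / 2)
    (hl₂ : l₂ = (-1 + Real.sqrt (1 - 4*K)) / 2)
    (hl : l = l₂ - l₁)
    (γ : ℝ) (hγ : γ = (1/2) * ((3*m+1)/m - (m-1)/(m * Real.sqrt (1 - 4*K))))
    (T : ℝ)
    (u : ℝ → ℝ → ℝ)
    (hupos : ∀ x t, t ∈ Ioo 0 T → 0 < u x t)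
    (hut : ∀ x t, t ∈ Ioo 0 T → DifferentiableAt ℝ (fun s => u x s) t)
    (hux : ∀ x t, t ∈ Ioo 0 T → DifferentiableAt ℝ (fun z => u z t ^ m) x)
    (huxx : ∀ x t, t ∈ Ioo 0 T → DifferentiableAt ℝ (deriv (fun z => u z t ^ m)) x)
    (hpde : ∀ x t, t ∈ Ioo 0 T →
      deriv (fun s => u x s) t =
        deriv (deriv (fun z => u z t ^ m)) x
          + deriv (fun z => u z t ^ m) x + K * u x t ^ m)
    (θ : ℝ → ℝ → ℝ)
    (hθ : ∀ y τ : ℝ, θ y τ = y ^ (-l₁/(m*l)) * u (Real.log y / l) (τ / l^2)) :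
    ∀ y ∈ Ioi (0:ℝ), ∀ τ ∈ Ioo 0 (l^2 * T),
      0 < θ y τ ∧
      DifferentiableAt ℝ (fun s => θ y s) τ ∧
      DifferentiableAt ℝ (fun z => θ z τ ^ m) y ∧
      DifferentiableAt ℝ (deriv (fun z => θ z τ ^ m)) y ∧
      y ^ (-γ) * deriv (fun s => θ y s) τ = deriv (deriv (fun z => θ z τ ^ m)) y := by
  intro y hy τ ⟨hτ0, hτT⟩
  have hm0 : 0 < m := by linarith
  have hl' : l = √(1 - 4 * K) := by rw [hl, hl₂, hl₁]; ring
  have hlpos : 0 < l := hl' ▸ sqrt_pos.mpr (by linarith)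
  have hl₁' : l₁ = (-1 - l) / 2 := by rw [hl₁, hl']
  set t := τ / l ^ 2
  have ht : t ∈ Ioo 0 T := ⟨by positivity, (div_lt_iff₀ (by positivity)).2 (by linarith)⟩
  have hθm : (fun z => θ z τ ^ m) =ᶠ[𝓝 y] fun z => z ^ (-l₁ / l) * u (log z / l) t ^ m := by
    filter_upwards [Ioi_mem_nhds hy] with z hz
    rw [hθ, mul_rpow (rpow_nonneg (le_of_lt hz) _) (hupos _ _ ht).le, ← rpow_mul (le_of_lt hz),
      div_mul_eq_div_div_swap, div_mul_cancel₀ _ hm0.ne']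
  have hspace := (hasDerivAt_deriv_rpow_mul_comp_log_div hy (fun x => hux x t ht)
    (huxx _ t ht)).congr_of_eventuallyEq hθm.deriv
  have htime : HasDerivAt (fun s => θ y s)
      (y ^ (-l₁ / (m * l)) * (deriv (fun s => u (log y / l) s) t * (1 / l ^ 2))) τ := by
    simp only [hθ]
    exact (((hut _ _ ht).hasDerivAt).comp τ ((hasDerivAt_id τ).div_const _)).const_mul _
  refine ⟨?_, htime.differentiableAt,
    (hasDerivAt_rpow_mul_comp_log_div hy (hux _ t ht)).differentiableAt.congr_of_eventuallyEq hθm,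
    hspace.differentiableAt, ?_⟩
  · rw [hθ]
    exact mul_pos (rpow_pos_of_pos hy _) (hupos _ _ ht)
  obtain ⟨hcoef₀, hcoef₁⟩ := exponent_coeffs_of_sq_eq hlpos.ne' (hl' ▸ sq_sqrt (by linarith))
    (show -l₁ / l = (1 + l) / (2 * l) by rw [hl₁']; field_simp; ring)
  have hexp : -γ + -l₁ / (m * l) = -l₁ / l - 2 := by
    rw [hγ, hl₁', ← hl']; field_simp; ring
  rw [htime.deriv, hspace.deriv, hpde _ _ ht, ← mul_assoc, ← rpow_add hy, hexp, hcoef₀, hcoef₁]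
  ring

/-- for `0 < K < 1/4`, the change of variables
`θ(y,τ) = y^{-λ₁/(mλ)} u((ln y)/λ, τ/λ²)` maps classical solutions of
`u_t = (u^m)_{xx} + (u^m)_x + K u^m` on `ℝ × (0,T)` to classical solutions of
`y^{-γ} θ_τ = (θ^m)_{yy}` on `(0,∞) × (0,λ²T)`, where
`γ = (1/2)[(3m+1)/m - (m-1)/(m√(1-4K))]`. -/
theorem stmt2
    (m K : ℝ) (hm : 1 < m) (hK0 : 0 < K) (hK : K < 1/4)
    (l₁ l₂ l : ℝ)
    (hl₁ : l₁ = (-1 - Real.sqrt (1 - 4*K)) / 2)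
    (hl₂ : l₂ = (-1 + Real.sqrt (1 - 4*K)) / 2)
    (hl : l = l₂ - l₁)
    (γ : ℝ) (hγ : γ = (1/2) * ((3*m+1)/m - (m-1)/(m * Real.sqrt (1 - 4*K))))
    (T : ℝ) (hT : 0 < T)
    (u : ℝ → ℝ → ℝ)
    (hupos : ∀ x t, t ∈ Ioo 0 T → 0 < u x t)
    (hut : ∀ x t, t ∈ Ioo 0 T → DifferentiableAt ℝ (fun s => u x s) t)
    (hux : ∀ x t, t ∈ Ioo 0 T → DifferentiableAt ℝ (fun z => u z t ^ m) x)
    (huxx : ∀ x t, t ∈ Ioo 0 T → DifferentiableAt ℝ (deriv (fun z => u z t ^ m)) x)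
    (hpde : ∀ x t, t ∈ Ioo 0 T →
      deriv (fun s => u x s) t =
        deriv (deriv (fun z => u z t ^ m)) x
          + deriv (fun z => u z t ^ m) x + K * u x t ^ m)
    (θ : ℝ → ℝ → ℝ)
    (hθ : ∀ y τ : ℝ, θ y τ = y ^ (-l₁/(m*l)) * u (Real.log y / l) (τ / l^2)) :
    ∀ y ∈ Ioi (0:ℝ), ∀ τ ∈ Ioo 0 (l^2 * T),
      0 < θ y τ ∧
      DifferentiableAt ℝ (fun s => θ y s) τ ∧
      DifferentiableAt ℝ (fun z => θ z τ ^ m) y ∧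
      DifferentiableAt ℝ (deriv (fun z => θ z τ ^ m)) y ∧
      y ^ (-γ) * deriv (fun s => θ y s) τ = deriv (deriv (fun z => θ z τ ^ m)) y :=
  stmt2_general m K hm hK l₁ l₂ l hl₁ hl₂ hl γ hγ T u hupos hut hux huxx hpde θ hθ
end

section
/- Let m > 1 and let u : ℝ × (0,∞) → (0,∞) be a classical solution of u_t = (u^m)_{xx} + (u^m)_x + (1/4)·u^m. Define θ : ℝ × (0,∞) → (0,∞) by θ(y,τ) = e^{−y/(m−1)} · u( −2m y/(m−1) , 4m² τ/(m−1)² ). Then θ is differentiable in τ, y ↦ θ(y,τ)^m is twice differentiable in y, and θ satisfies e^{−y} θ_τ = (θ^m)_{yy} pointwise on ℝ × (0,∞). -/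
open Real Set

/-- for `K = 1/4`, the change of variables
`θ(y,τ) = e^{-y/(m-1)} u(-2my/(m-1), 4m²τ/(m-1)²)` maps classical solutions of
`u_t = (u^m)_{xx} + (u^m)_x + (1/4) u^m` on `ℝ × (0,∞)` to classical solutions of
the exponential-density equation `e^{-y} θ_τ = (θ^m)_{yy}` on `ℝ × (0,∞)`. -/
theorem stmt4
    (m : ℝ) (hm : 1 < m)
    (u : ℝ → ℝ → ℝ)
    (hupos : ∀ x t : ℝ, 0 < t → 0 < u x t)
    (hut : ∀ x t : ℝ, 0 < t → DifferentiableAt ℝ (fun s => u x s) t)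
    (hux : ∀ x t : ℝ, 0 < t → DifferentiableAt ℝ (fun z => u z t ^ m) x)
    (huxx : ∀ x t : ℝ, 0 < t → DifferentiableAt ℝ (deriv (fun z => u z t ^ m)) x)
    (hpde : ∀ x t : ℝ, 0 < t →
      deriv (fun s => u x s) t =
        deriv (deriv (fun z => u z t ^ m)) x
          + deriv (fun z => u z t ^ m) x + (1/4) * u x t ^ m)
    (θ : ℝ → ℝ → ℝ)
    (hθ : ∀ y τ : ℝ, θ y τ =
      Real.exp (-y/(m-1)) * u (-2*m*y/(m-1)) (4*m^2*τ/(m-1)^2)) :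
    ∀ y τ : ℝ, 0 < τ →
      0 < θ y τ ∧
      DifferentiableAt ℝ (fun s => θ y s) τ ∧
      DifferentiableAt ℝ (fun z => θ z τ ^ m) y ∧
      DifferentiableAt ℝ (deriv (fun z => θ z τ ^ m)) y ∧
      Real.exp (-y) * deriv (fun s => θ y s) τ = deriv (deriv (fun z => θ z τ ^ m)) y := by
  intro y τ hτ
  have hc : (0:ℝ) < m - 1 := by linarith
  have hc0 : m - 1 ≠ 0 := ne_of_gt hc
  have hc2 : (0:ℝ) < (m-1)^2 := by positivity
  have hm0 : (0:ℝ) < m := by linarith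
  set t : ℝ := 4*m^2*τ/(m-1)^2 with ht_def
  have ht : 0 < t := by rw [ht_def]; positivity
  set X : ℝ → ℝ := fun z => -2*m*z/(m-1) with hX_def
  set E : ℝ → ℝ := fun z => Real.exp (-(m*z)/(m-1)) with hE_def
  set V : ℝ → ℝ := fun z => u z t ^ m with hV_def
  set V' : ℝ → ℝ := deriv V with hV'_def
  -- function identity for the space function
  have hfθ : (fun z => θ z τ ^ m) = fun z => E z * V (X z) := by
    funext z
    rw [hθ, ← ht_def, Real.mul_rpow (Real.exp_pos _).le (hupos _ _ ht).le, ← Real.exp_mul]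
    simp only [hE_def, hV_def, hX_def]
    rw [show -z/(m-1)*m = -(m*z)/(m-1) from by ring]
  -- derivatives of the building blocks
  have hX' : ∀ z : ℝ, HasDerivAt X (-2*m/(m-1)) z := by
    intro z
    have h := (hasDerivAt_id z).const_mul (-2*m/(m-1))
    simp only [mul_one] at h
    have : X = fun w => -2*m/(m-1) * w := by funext w; rw [hX_def]; ring
    rw [this]; exact h
  have hE' : ∀ z : ℝ, HasDerivAt E (-(m/(m-1)) * E z) z := by
    intro z
    have hin : HasDerivAt (fun w : ℝ => -(m*w)/(m-1)) (-(m/(m-1))) z := by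
      have h := (hasDerivAt_id z).const_mul (-(m/(m-1)))
      simp only [mul_one] at h
      have : (fun w : ℝ => -(m*w)/(m-1)) = fun w => -(m/(m-1)) * w := by
        funext w; ring
      rw [this]; exact h
    have := hin.exp
    rw [hE_def]
    convert this using 1
    all_goals ring
  have hV1 : ∀ z : ℝ, HasDerivAt V (V' z) z := fun z => (hux z t ht).hasDerivAt
  have hV2 : ∀ z : ℝ, HasDerivAt V' (deriv V' z) z := fun z => (huxx z t ht).hasDerivAt
  -- composition with X
  have hVX : ∀ z : ℝ, HasDerivAt (fun w => V (X w)) (V' (X z) * (-2*m/(m-1))) z := by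
    intro z
    have := (hV1 (X z)).comp z (hX' z)
    simpa [Function.comp_def] using this
  have hV'X : ∀ z : ℝ, HasDerivAt (fun w => V' (X w)) (deriv V' (X z) * (-2*m/(m-1))) z := by
    intro z
    have := (hV2 (X z)).comp z (hX' z)
    simpa [Function.comp_def] using this
  -- first space derivative
  have hfθ' : ∀ z : ℝ, HasDerivAt (fun w => θ w τ ^ m)
      (-(m/(m-1)) * E z * V (X z) + E z * (V' (X z) * (-2*m/(m-1)))) z := by
    intro z
    rw [hfθ]
    exact (hE' z).mul (hVX z)
  set D1 : ℝ → ℝ := fun z => E z * (-(m/(m-1)) * V (X z) + -2*m/(m-1) * V' (X z)) with hD1_def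
  have hderiv1 : deriv (fun z => θ z τ ^ m) = D1 := by
    funext z
    rw [(hfθ' z).deriv, hD1_def]
    ring
  -- second space derivative
  have hD1' : ∀ z : ℝ, HasDerivAt D1
      (-(m/(m-1)) * E z * (-(m/(m-1)) * V (X z) + -2*m/(m-1) * V' (X z))
        + E z * (-(m/(m-1)) * (V' (X z) * (-2*m/(m-1)))
            + -2*m/(m-1) * (deriv V' (X z) * (-2*m/(m-1))))) z := by
    intro z
    have hA := ((hVX z).const_mul (-(m/(m-1)))).add ((hV'X z).const_mul (-2*m/(m-1)))
    rw [hD1_def]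
    exact (hE' z).mul hA
  -- time derivative
  have hlinτ : HasDerivAt (fun s : ℝ => 4*m^2*s/(m-1)^2) (4*m^2/(m-1)^2) τ := by
    have h := (hasDerivAt_id τ).const_mul (4*m^2/(m-1)^2)
    simp only [mul_one] at h
    have : (fun s : ℝ => 4*m^2*s/(m-1)^2) = fun s => 4*m^2/(m-1)^2 * s := by
      funext s; ring
    rw [this]; exact h
  have hτfun : (fun s => θ y s) = fun s => Real.exp (-y/(m-1)) * u (X y) (4*m^2*s/(m-1)^2) := by
    funext s
    rw [hθ, hX_def]
  have hT : HasDerivAt (fun s => θ y s)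
      (Real.exp (-y/(m-1)) * (deriv (fun s => u (X y) s) t * (4*m^2/(m-1)^2))) τ := by
    rw [hτfun]
    have hcomp := ((hut (X y) t ht).hasDerivAt.comp τ hlinτ)
    have hcomp' : HasDerivAt (fun s => u (X y) (4*m^2*s/(m-1)^2))
        (deriv (fun s => u (X y) s) t * (4*m^2/(m-1)^2)) τ := by
      simpa [Function.comp_def, ht_def] using hcomp
    exact hcomp'.const_mul _
  refine ⟨?_, hT.differentiableAt, (hfθ' y).differentiableAt, ?_, ?_⟩
  · rw [hθ, ← ht_def]; exact mul_pos (Real.exp_pos _) (hupos _ _ ht)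
  · rw [hderiv1]; exact (hD1' y).differentiableAt
  · rw [hderiv1, (hD1' y).deriv, hT.deriv]
    have hpde' := hpde (X y) t ht
    rw [hpde']
    have hexp : Real.exp (-y) * Real.exp (-y/(m-1)) = E y := by
      rw [← Real.exp_add, hE_def]
      congr 1
      field_simp
      ring
    have hEy : Real.exp (-y) * (Real.exp (-y/(m-1)) *
        ((deriv (deriv fun z => u z t ^ m) (X y) + deriv (fun z => u z t ^ m) (X y)
          + 1/4 * u (X y) t ^ m) * (4*m^2/(m-1)^2)))
        = E y * ((deriv V' (X y) + V' (X y) + 1/4 * V (X y)) * (4*m^2/(m-1)^2)) := by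
      rw [← mul_assoc, hexp, hV'_def, hV_def]
    rw [hEy]
    field_simp
    ring
end

section
/- Let m > 1, K > 1/4, ω = √(4K−1), and I = (−π/ω, π/ω). Let u : I × (0,T) → (0,∞) be a classical solution of u_t = (u^m)_{xx} + (u^m)_x + K·u^m on I × (0,T). Define θ : ℝ × (0,T) → (0,∞) by θ(y,t) = e^{x/(2m)} · cos(ωx/2)^{−1/m} · u(x,t), where x = (2/ω)·arctan(y). Then θ is a classical solution of f(y)·θ_t = (θ^m)_{yy} on ℝ × (0,T), where f(y) = (4/(4K−1)) · e^{(m−1)·arctan(y)/(mω)} · (1+y²)^{−(3m+1)/(2m)}. -/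
open Real Set
set_option maxHeartbeats 2000000

/-- for `K > 1/4`, with `ω = √(4K-1)` and `I = (-π/ω, π/ω)`, the change
of variables `θ(y,t) = e^{x/(2m)} cos(ωx/2)^{-1/m} u(x,t)` with `x = (2/ω) arctan y`
maps classical solutions of `u_t = (u^m)_{xx} + (u^m)_x + K u^m` on `I × (0,T)` to
classical solutions of `f(y) θ_t = (θ^m)_{yy}` on `ℝ × (0,T)`, where
`f(y) = (4/(4K-1)) e^{(m-1)arctan(y)/(mω)} (1+y²)^{-(3m+1)/(2m)}`. -/
theorem stmt5
    (m K : ℝ) (hm : 1 < m) (hK : 1/4 < K)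
    (ω : ℝ) (hω : ω = Real.sqrt (4*K - 1))
    (T : ℝ) (hT : 0 < T)
    (u : ℝ → ℝ → ℝ)
    (hupos : ∀ x ∈ Ioo (-π/ω) (π/ω), ∀ t ∈ Ioo 0 T, 0 < u x t)
    (hut : ∀ x ∈ Ioo (-π/ω) (π/ω), ∀ t ∈ Ioo 0 T,
      DifferentiableAt ℝ (fun s => u x s) t)
    (hux : ∀ x ∈ Ioo (-π/ω) (π/ω), ∀ t ∈ Ioo 0 T,
      DifferentiableAt ℝ (fun z => u z t ^ m) x)
    (huxx : ∀ x ∈ Ioo (-π/ω) (π/ω), ∀ t ∈ Ioo 0 T,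
      DifferentiableAt ℝ (deriv (fun z => u z t ^ m)) x)
    (hpde : ∀ x ∈ Ioo (-π/ω) (π/ω), ∀ t ∈ Ioo 0 T,
      deriv (fun s => u x s) t =
        deriv (deriv (fun z => u z t ^ m)) x
          + deriv (fun z => u z t ^ m) x + K * u x t ^ m)
    (θ : ℝ → ℝ → ℝ)
    (hθ : ∀ y t : ℝ, θ y t =
      Real.exp ((2/ω) * Real.arctan y / (2*m)) *
        Real.cos (ω * ((2/ω) * Real.arctan y) / 2) ^ (-1/m) *
        u ((2/ω) * Real.arctan y) t)
    (f : ℝ → ℝ)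
    (hf : ∀ y : ℝ, f y = (4/(4*K-1)) * Real.exp ((m-1) * Real.arctan y / (m*ω)) *
      (1 + y^2) ^ (-(3*m+1)/(2*m))) :
    ∀ y : ℝ, ∀ t ∈ Ioo 0 T,
      0 < θ y t ∧
      DifferentiableAt ℝ (fun s => θ y s) t ∧
      DifferentiableAt ℝ (fun z => θ z t ^ m) y ∧
      DifferentiableAt ℝ (deriv (fun z => θ z t ^ m)) y ∧
      f y * deriv (fun s => θ y s) t = deriv (deriv (fun z => θ z t ^ m)) y := by
  intro y t ht
  have hK0 : (0:ℝ) < 4*K - 1 := by linarith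
  have hω0 : 0 < ω := by rw [hω]; exact Real.sqrt_pos.mpr hK0
  have hωsq : ω^2 = 4*K - 1 := by rw [hω, sq, Real.mul_self_sqrt hK0.le]
  have hm0 : (m:ℝ) ≠ 0 := by linarith
  set X : ℝ → ℝ := fun z => (2/ω) * Real.arctan z with hX
  have hXI : ∀ z, X z ∈ Ioo (-π/ω) (π/ω) := by
    intro z
    obtain ⟨h1, h2⟩ := Real.arctan_mem_Ioo z
    have hc : (0:ℝ) < 2/ω := by positivity
    constructor
    · have h3 := (mul_lt_mul_iff_right₀ hc).mpr h1
      have e : (2/ω) * (-(π/2)) = -π/ω := by field_simp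
      exact e ▸ h3
    · have h3 := (mul_lt_mul_iff_right₀ hc).mpr h2
      have e : (2/ω) * (π/2) = π/ω := by field_simp
      exact e ▸ h3
  have hpz : ∀ z : ℝ, (0:ℝ) < 1 + z^2 := fun z => by positivity
  have hsz : ∀ z : ℝ, 0 < Real.sqrt (1+z^2) := fun z => Real.sqrt_pos.mpr (hpz z)
  have hssq : ∀ z : ℝ, Real.sqrt (1+z^2) ^ 2 = 1 + z^2 := fun z => Real.sq_sqrt (hpz z).le
  have hcos : ∀ z : ℝ, Real.cos (ω * ((2/ω) * Real.arctan z) / 2) = 1 / Real.sqrt (1+z^2) := by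
    intro z
    rw [show ω * ((2/ω) * Real.arctan z) / 2 = Real.arctan z by field_simp, Real.cos_arctan]
  -- simplified form of θ
  have hθ' : ∀ z t' : ℝ, θ z t' =
      Real.exp (Real.arctan z / (m*ω)) * Real.sqrt (1+z^2) ^ (1/m : ℝ) * u (X z) t' := by
    intro z t'
    rw [hθ, hcos]
    congr 2
    · congr 1; field_simp
    · rw [Real.div_rpow zero_le_one (Real.sqrt_nonneg _), Real.one_rpow, neg_div,
        Real.rpow_neg (Real.sqrt_nonneg _), one_div, inv_inv]
  have hupos' := hupos (X y) (hXI y) t ht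
  have hθpos : 0 < θ y t := by
    rw [hθ']
    exact mul_pos (mul_pos (Real.exp_pos _) (Real.rpow_pos_of_pos (hsz y) _)) hupos'
  -- θ^m
  have hθm : ∀ z : ℝ, θ z t ^ m =
      Real.exp (Real.arctan z / ω) * Real.sqrt (1+z^2) * ((fun w => u w t ^ m) (X z)) := by
    intro z
    rw [hθ' z t, Real.mul_rpow (by positivity) (hupos (X z) (hXI z) t ht).le,
      Real.mul_rpow (Real.exp_pos _).le (by positivity)]
    simp only
    congr 1
    congr 1
    · rw [← Real.exp_mul]; congr 1; field_simp
    · rw [← Real.rpow_mul (Real.sqrt_nonneg _), one_div, inv_mul_cancel₀ hm0, Real.rpow_one]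
  -- derivative building blocks
  have hXd : ∀ z : ℝ, HasDerivAt X ((2/ω) * (1/(1+z^2))) z :=
    fun z => (Real.hasDerivAt_arctan z).const_mul (2/ω)
  have hAd : ∀ z : ℝ, HasDerivAt (fun w => Real.exp (Real.arctan w / ω))
      (Real.exp (Real.arctan z / ω) * (1/(1+z^2)/ω)) z :=
    fun z => ((Real.hasDerivAt_arctan z).div_const ω).exp
  have hSd : ∀ z : ℝ, HasDerivAt (fun w => Real.sqrt (1+w^2)) (z / Real.sqrt (1+z^2)) z := by
    intro z
    have h := ((hasDerivAt_pow 2 z).const_add 1).sqrt (hpz z).ne'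
    convert h using 1
    have := (hsz z).ne'
    field_simp
    ring
  have hVXd : ∀ z : ℝ, HasDerivAt (fun w => (fun w' => u w' t ^ m) (X w))
      (deriv (fun w' => u w' t ^ m) (X z) * ((2/ω) * (1/(1+z^2)))) z :=
    fun z => ((hux (X z) (hXI z) t ht).hasDerivAt).comp z (hXd z)
  set G : ℝ → ℝ := fun z => Real.exp (Real.arctan z / ω) / Real.sqrt (1+z^2) *
      ((1/ω + z) * u (X z) t ^ m + (2/ω) * deriv (fun w' => u w' t ^ m) (X z)) with hGdef
  have hFd : ∀ z : ℝ, HasDerivAt (fun w => Real.exp (Real.arctan w / ω) * Real.sqrt (1+w^2) *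
      ((fun w' => u w' t ^ m) (X w))) (G z) z := by
    intro z
    have h := ((hAd z).mul (hSd z)).mul (hVXd z)
    refine h.congr_deriv ?_
    symm
    simp only [Pi.mul_apply, Pi.add_apply]
    rw [hGdef]
    simp only
    have h2 := hssq z
    have hs := (hsz z).ne'
    set s := Real.sqrt (1+z^2) with hsv
    rw [← h2]
    field_simp
  -- second spatial derivative
  have hGd : HasDerivAt G
      (4/ω^2 * (Real.exp (Real.arctan y / ω) / (Real.sqrt (1+y^2) * (1+y^2))) *
        (deriv (deriv (fun w' => u w' t ^ m)) (X y) + deriv (fun w' => u w' t ^ m) (X y)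
          + K * u (X y) t ^ m)) y := by
    have hq : HasDerivAt (fun z => Real.exp (Real.arctan z / ω) / Real.sqrt (1+z^2))
        ((Real.exp (Real.arctan y / ω) * (1/(1+y^2)/ω) * Real.sqrt (1+y^2)
          - Real.exp (Real.arctan y / ω) * (y / Real.sqrt (1+y^2))) / Real.sqrt (1+y^2) ^ 2) y :=
      (hAd y).div (hSd y) (hsz y).ne'
    have hp1 : HasDerivAt (fun z : ℝ => 1/ω + z) 1 y := by
      simpa using (hasDerivAt_id y).const_add (1/ω)
    have hu1 : HasDerivAt (fun w => u (X w) t ^ m)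
        (deriv (fun w' => u w' t ^ m) (X y) * ((2/ω) * (1/(1+y^2)))) y := hVXd y
    have hp2 := hp1.mul hu1
    have hp3 : HasDerivAt (fun w => deriv (fun w' => u w' t ^ m) (X w))
        (deriv (deriv (fun w' => u w' t ^ m)) (X y) * ((2/ω) * (1/(1+y^2)))) y :=
      ((huxx (X y) (hXI y) t ht).hasDerivAt).comp y (hXd y)
    have hp4 := hp2.add (hp3.const_mul (2/ω))
    have h := hq.mul hp4
    refine h.congr_deriv ?_
    symm
    simp only [Pi.mul_apply, Pi.add_apply]
    have hKe : K = (ω^2+1)/4 := by linarith [hωsq]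
    rw [hKe]
    have h2 := hssq y
    have hs := (hsz y).ne'
    set s := Real.sqrt (1+y^2) with hsv
    rw [← h2]
    field_simp
    linear_combination (-(ω^2 *
      u (X y) t ^ m)) * h2
  have hFeq : (fun z => θ z t ^ m) = (fun w => Real.exp (Real.arctan w / ω) * Real.sqrt (1+w^2) *
      ((fun w' => u w' t ^ m) (X w))) := funext hθm
  have hd1 : DifferentiableAt ℝ (fun z => θ z t ^ m) y := by
    rw [hFeq]; exact (hFd y).differentiableAt
  have hderivF : deriv (fun z => θ z t ^ m) = G := by
    rw [hFeq]; exact funext fun z => (hFd z).deriv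
  have hd2 : DifferentiableAt ℝ (deriv (fun z => θ z t ^ m)) y := by
    rw [hderivF]; exact hGd.differentiableAt
  have hderiv2 : deriv (deriv (fun z => θ z t ^ m)) y =
      4/ω^2 * (Real.exp (Real.arctan y / ω) / (Real.sqrt (1+y^2) * (1+y^2))) *
        (deriv (deriv (fun w' => u w' t ^ m)) (X y) + deriv (fun w' => u w' t ^ m) (X y)
          + K * u (X y) t ^ m) := by
    rw [hderivF]; exact hGd.deriv
  -- time derivative
  have hθt : (fun s' => θ y s') = fun s' =>
      (Real.exp (Real.arctan y / (m*ω)) * Real.sqrt (1+y^2) ^ (1/m:ℝ)) * u (X y) s' := by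
    funext s'
    rw [hθ' y s', mul_assoc]
  have hdt : DifferentiableAt ℝ (fun s' => θ y s') t := by
    rw [hθt]; exact (hut (X y) (hXI y) t ht).const_mul _
  have hderivt : deriv (fun s' => θ y s') t =
      (Real.exp (Real.arctan y / (m*ω)) * Real.sqrt (1+y^2) ^ (1/m:ℝ)) *
        deriv (fun s' => u (X y) s') t := by
    rw [hθt]; exact deriv_const_mul _ (hut (X y) (hXI y) t ht)
  refine ⟨hθpos, hdt, hd1, hd2, ?_⟩
  rw [hderivt, hderiv2, hpde (X y) (hXI y) t ht, hf]
  -- final algebraic identity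
  have e1 : Real.exp ((m-1) * Real.arctan y / (m*ω)) * Real.exp (Real.arctan y / (m*ω))
      = Real.exp (Real.arctan y / ω) := by
    rw [← Real.exp_add]; congr 1; field_simp; ring
  have e2 : Real.sqrt (1+y^2) ^ (1/m:ℝ) = ((1+y^2) : ℝ) ^ (1/(2*m):ℝ) := by
    rw [Real.sqrt_eq_rpow, ← Real.rpow_mul (hpz y).le]
    congr 1; field_simp
  have e3 : ((1+y^2 : ℝ) ^ (-(3*m+1)/(2*m):ℝ)) * ((1+y^2):ℝ) ^ (1/(2*m):ℝ)
      = ((1+y^2):ℝ) ^ (-(3/2) : ℝ) := by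
    rw [← Real.rpow_add (hpz y)]; congr 1; field_simp; ring
  have e4 : ((1+y^2):ℝ) ^ (-(3/2) : ℝ) = 1 / (Real.sqrt (1+y^2) * (1+y^2)) := by
    rw [Real.rpow_neg (hpz y).le, show (3/2 : ℝ) = 1/2 + 1 by norm_num,
      Real.rpow_add (hpz y), Real.rpow_one, ← Real.sqrt_eq_rpow, one_div]
  have hfc : 4/(4*K-1) * Real.exp ((m-1) * Real.arctan y / (m*ω)) *
      ((1+y^2 : ℝ)) ^ (-(3*m+1)/(2*m):ℝ) *
      (Real.exp (Real.arctan y / (m*ω)) * Real.sqrt (1+y^2) ^ (1/m:ℝ)) =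
      4/ω^2 * (Real.exp (Real.arctan y / ω) / (Real.sqrt (1+y^2) * (1+y^2))) := by
    rw [hωsq, e2]
    calc 4/(4*K-1) * Real.exp ((m-1) * Real.arctan y / (m*ω)) *
        ((1+y^2 : ℝ)) ^ (-(3*m+1)/(2*m):ℝ) *
        (Real.exp (Real.arctan y / (m*ω)) * ((1+y^2:ℝ)) ^ (1/(2*m):ℝ))
        = 4/(4*K-1) * (Real.exp ((m-1) * Real.arctan y / (m*ω)) * Real.exp (Real.arctan y / (m*ω)))
          * (((1+y^2 : ℝ)) ^ (-(3*m+1)/(2*m):ℝ) * ((1+y^2:ℝ)) ^ (1/(2*m):ℝ)) := by ring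
      _ = 4/(4*K-1) * (Real.exp (Real.arctan y / ω) / (Real.sqrt (1+y^2) * (1+y^2))) := by
          rw [e1, e3, e4]; ring
  linear_combination (deriv (deriv (fun w' => u w' t ^ m)) (X y)
    + deriv (fun w' => u w' t ^ m) (X y) + K * u (X y) t ^ m) * hfc
end

section
/- Let m > 1 and γ < (m+1)/m, set μ = ((1−γ)m+1)/(2m) (so μ > 0) and N = 2 + 1/μ. Let w : (0,∞) × (0,S) → (0,∞) be positive, differentiable in s, with r ↦ w(r,s)^m twice differentiable in r, satisfying the radial porous medium equation w_s = (w^m)_{rr} + ((N−1)/r)(w^m)_r pointwise on (0,∞) × (0,S). Then θ : (0,∞) × (0,S/μ²) → (0,∞) defined by θ(y,τ) = y^{1/m} · w( y^{μ}, μ²·τ ) is a classical solution of y^{−γ} θ_τ = (θ^m)_{yy} on (0,∞) × (0,S/μ²). -/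
open Real Set

/-- for `m > 1` and `γ < (m+1)/m`, with `μ = ((1-γ)m+1)/(2m) > 0` and
`N = 2 + 1/μ`, the transformation `θ(y,τ) = y^{1/m} w(y^μ, μ²τ)` maps solutions of the
radial porous medium equation `w_s = (w^m)_{rr} + ((N-1)/r)(w^m)_r` on `(0,∞)×(0,S)`
to classical solutions of `y^{-γ} θ_τ = (θ^m)_{yy}` on `(0,∞)×(0,S/μ²)`. -/
theorem stmt8
    (m γ : ℝ) (hm : 1 < m) (hγ : γ < (m+1)/m)
    (μ : ℝ) (hμ : μ = ((1-γ)*m + 1)/(2*m))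
    (hμpos : 0 < μ)
    (N : ℝ) (hN : N = 2 + 1/μ)
    (S : ℝ) (hS : 0 < S)
    (w : ℝ → ℝ → ℝ)
    (hwpos : ∀ r ∈ Ioi (0:ℝ), ∀ s ∈ Ioo 0 S, 0 < w r s)
    (hws : ∀ r ∈ Ioi (0:ℝ), ∀ s ∈ Ioo 0 S, DifferentiableAt ℝ (fun s' => w r s') s)
    (hwr : ∀ r ∈ Ioi (0:ℝ), ∀ s ∈ Ioo 0 S,
      DifferentiableAt ℝ (fun r' => w r' s ^ m) r)
    (hwrr : ∀ r ∈ Ioi (0:ℝ), ∀ s ∈ Ioo 0 S,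
      DifferentiableAt ℝ (deriv (fun r' => w r' s ^ m)) r)
    (hpde : ∀ r ∈ Ioi (0:ℝ), ∀ s ∈ Ioo 0 S,
      deriv (fun s' => w r s') s =
        deriv (deriv (fun r' => w r' s ^ m)) r
          + ((N-1)/r) * deriv (fun r' => w r' s ^ m) r)
    (θ : ℝ → ℝ → ℝ)
    (hθ : ∀ y τ : ℝ, θ y τ = y ^ (1/m) * w (y ^ μ) (μ^2 * τ)) :
    ∀ y ∈ Ioi (0:ℝ), ∀ τ ∈ Ioo 0 (S/μ^2),
      0 < θ y τ ∧
      DifferentiableAt ℝ (fun s => θ y s) τ ∧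
      DifferentiableAt ℝ (fun z => θ z τ ^ m) y ∧
      DifferentiableAt ℝ (deriv (fun z => θ z τ ^ m)) y ∧
      y ^ (-γ) * deriv (fun s => θ y s) τ = deriv (deriv (fun z => θ z τ ^ m)) y := by
  intro y hy τ hτ
  have hy0 : (0:ℝ) < y := hy
  have hm0 : m ≠ 0 := by positivity
  have hμ0 : μ ≠ 0 := hμpos.ne'
  have hμ2 : (0:ℝ) < μ ^ 2 := by positivity
  set s : ℝ := μ ^ 2 * τ with hsdef
  have hs : s ∈ Ioo 0 S := by
    refine ⟨mul_pos hμ2 hτ.1, ?_⟩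
    have h := (lt_div_iff₀ hμ2).mp hτ.2
    rw [hsdef, mul_comm]; exact h
  have hr : y ^ μ ∈ Ioi (0:ℝ) := rpow_pos_of_pos hy0 μ
  set g : ℝ → ℝ := fun r => w r s ^ m with hgdef
  have hgd : ∀ z : ℝ, 0 < z → DifferentiableAt ℝ g (z ^ μ) :=
    fun z hz => hwr _ (rpow_pos_of_pos hz μ) s hs
  have hpow : ∀ z : ℝ, 0 < z → HasDerivAt (fun x : ℝ => x ^ μ) (μ * z ^ (μ - 1)) z :=
    fun z hz => Real.hasDerivAt_rpow_const (Or.inl hz.ne')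
  have hzz : ∀ z : ℝ, 0 < z → z * z ^ (μ - 1) = z ^ μ := by
    intro z hz
    nth_rewrite 1 [← Real.rpow_one z]
    rw [← Real.rpow_add hz]; ring_nf
  set G : ℝ → ℝ := fun z => g (z ^ μ) + μ * z ^ μ * deriv g (z ^ μ) with hGdef
  -- derivative of F z = z * g (z^μ)
  have hF : ∀ z : ℝ, 0 < z → HasDerivAt (fun x => x * g (x ^ μ)) (G z) z := by
    intro z hz
    have h1 := ((hgd z hz).hasDerivAt).comp z (hpow z hz)
    have h2 : HasDerivAt (fun x => x * g (x ^ μ))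
        (1 * (g ∘ fun x => x ^ μ) z + id z * (deriv g (z ^ μ) * (μ * z ^ (μ - 1)))) z :=
      (hasDerivAt_id z).fun_mul h1
    convert h2 using 1
    simp only [hGdef, one_mul, Function.comp_def, id_eq]
    linear_combination (-(μ * deriv g (z ^ μ))) * hzz z hz
  -- eventual equality of θ^m with F near y
  have hEv : (fun z => θ z τ ^ m) =ᶠ[nhds y] (fun z => z * g (z ^ μ)) := by
    filter_upwards [isOpen_Ioi.eventually_mem hy] with z hz
    have hz0 : (0:ℝ) < z := hz
    have hwz : 0 < w (z ^ μ) s := hwpos _ (rpow_pos_of_pos hz0 μ) s hs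
    rw [hθ z τ, Real.mul_rpow (Real.rpow_nonneg hz0.le _) hwz.le,
      ← Real.rpow_mul hz0.le, one_div_mul_cancel hm0, Real.rpow_one]
  -- positivity
  have hpos : 0 < θ y τ := by
    rw [hθ y τ]
    exact mul_pos (rpow_pos_of_pos hy0 _) (hwpos _ hr s hs)
  -- time derivative
  have hθτ : HasDerivAt (fun s' => θ y s')
      (y ^ (1/m) * (deriv (fun s' => w (y ^ μ) s') s * (μ ^ 2 * 1))) τ := by
    have hin : HasDerivAt (fun τ' : ℝ => μ ^ 2 * τ') (μ ^ 2 * 1) τ :=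
      (hasDerivAt_id τ).const_mul (μ ^ 2)
    have hout : HasDerivAt (fun s' => w (y ^ μ) s')
        (deriv (fun s' => w (y ^ μ) s') s) (μ ^ 2 * τ) :=
      (hws _ hr s hs).hasDerivAt
    have h := (hout.comp τ hin).const_mul (y ^ (1/m))
    exact h.congr_of_eventuallyEq (Filter.Eventually.of_forall fun s' => hθ y s')
  -- derivative of G at y
  have hdg' : DifferentiableAt ℝ (deriv g) (y ^ μ) := hwrr _ hr s hs
  have hG1 : HasDerivAt (fun z : ℝ => g (z ^ μ)) (deriv g (y ^ μ) * (μ * y ^ (μ - 1))) y :=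
    by have := ((hgd y hy0).hasDerivAt).comp y (hpow y hy0); exact this
  have hG2 : HasDerivAt (fun z : ℝ => μ * z ^ μ * deriv g (z ^ μ))
      (μ * (μ * y ^ (μ - 1)) * deriv g (y ^ μ)
        + μ * y ^ μ * (deriv (deriv g) (y ^ μ) * (μ * y ^ (μ - 1)))) y := by
    have ha : HasDerivAt (fun z : ℝ => μ * z ^ μ) (μ * (μ * y ^ (μ - 1))) y :=
      (hpow y hy0).const_mul μ
    have hb : HasDerivAt (fun z : ℝ => deriv g (z ^ μ))
        (deriv (deriv g) (y ^ μ) * (μ * y ^ (μ - 1))) y :=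
      by have := (hdg'.hasDerivAt).comp y (hpow y hy0); exact this
    exact ha.mul hb
  have hGy : HasDerivAt G
      (deriv g (y ^ μ) * (μ * y ^ (μ - 1))
        + (μ * (μ * y ^ (μ - 1)) * deriv g (y ^ μ)
          + μ * y ^ μ * (deriv (deriv g) (y ^ μ) * (μ * y ^ (μ - 1))))) y := hG1.add hG2
  -- deriv of θ^m agrees with G eventually
  have hEvDeriv : deriv (fun z => θ z τ ^ m) =ᶠ[nhds y] G := by
    have h1 : deriv (fun z => θ z τ ^ m) =ᶠ[nhds y] deriv (fun z => z * g (z ^ μ)) :=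
      hEv.deriv
    have h2 : deriv (fun z => z * g (z ^ μ)) =ᶠ[nhds y] G := by
      filter_upwards [isOpen_Ioi.eventually_mem hy] with z hz
      exact (hF z hz).deriv
    exact h1.trans h2
  have hdiff1 : DifferentiableAt ℝ (fun z => θ z τ ^ m) y :=
    hEv.differentiableAt_iff.mpr (hF y hy0).differentiableAt
  have hdiff2 : DifferentiableAt ℝ (deriv (fun z => θ z τ ^ m)) y :=
    hEvDeriv.differentiableAt_iff.mpr hGy.differentiableAt
  refine ⟨hpos, hθτ.differentiableAt, hdiff1, hdiff2, ?_⟩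
  -- final equation
  have hRHS : deriv (deriv (fun z => θ z τ ^ m)) y
      = deriv g (y ^ μ) * (μ * y ^ (μ - 1))
        + (μ * (μ * y ^ (μ - 1)) * deriv g (y ^ μ)
          + μ * y ^ μ * (deriv (deriv g) (y ^ μ) * (μ * y ^ (μ - 1)))) := by
    rw [hEvDeriv.deriv_eq]; exact hGy.deriv
  rw [hθτ.deriv, hRHS]
  have hW := hpde _ hr s hs
  rw [hW]
  set A := deriv g (y ^ μ) with hA
  set B := deriv (deriv g) (y ^ μ) with hB
  have h2μ : 2 * μ = 1 - γ + 1 / m := by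
    rw [hμ]; field_simp
  have key : y ^ (-γ) * y ^ (1/m) = y ^ μ * y ^ (μ - 1) := by
    rw [← Real.rpow_add hy0, ← Real.rpow_add hy0]
    congr 1; linarith
  have hQ : (0:ℝ) < y ^ μ := hr
  rw [hN]
  calc y ^ (-γ) * (y ^ (1/m) * ((B + (2 + 1/μ - 1) / y ^ μ * A) * (μ ^ 2 * 1)))
      = (y ^ (-γ) * y ^ (1/m)) * ((B + (2 + 1/μ - 1) / y ^ μ * A) * μ ^ 2) := by ring
    _ = (y ^ μ * y ^ (μ - 1)) * ((B + (2 + 1/μ - 1) / y ^ μ * A) * μ ^ 2) := by rw [key]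
    _ = A * (μ * y ^ (μ - 1)) + (μ * (μ * y ^ (μ - 1)) * A + μ * y ^ μ * (B * (μ * y ^ (μ - 1)))) := by
        field_simp
        ring
end

section
/- Let m > 1, γ < (m+1)/m, C > 0, and set α = (1−γ)/(m+1−mγ), β = 1/(m+1−mγ), k = (m−1)/( m(2−γ)(m+1−mγ) ). Define B(y,τ) = τ^{−α} · ( C − k·(y·τ^{−β})^{2−γ} )^{1/(m−1)}. Then at every point (y,τ) with y > 0, τ > 0 and C − k·(y·τ^{−β})^{2−γ} > 0, the function B satisfies the weighted porous medium equation y^{−γ} ∂_τ B = ∂²_y (B^m). -/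
open Real Set

/-- the Barenblatt-type function
`B(y,τ) = τ^{-α} (C - k (y τ^{-β})^{2-γ})^{1/(m-1)}` satisfies the weighted porous
medium equation `y^{-γ} ∂_τ B = ∂²_y (B^m)` at every point where `y > 0`, `τ > 0` and
the parenthesis is positive; here `α = (1-γ)/(m+1-mγ)`, `β = 1/(m+1-mγ)`,
`k = (m-1)/(m(2-γ)(m+1-mγ))`. -/
theorem stmt9
    (m γ C : ℝ) (hm : 1 < m) (hγ : γ < (m+1)/m) (hC : 0 < C)
    (α β k : ℝ)
    (hα : α = (1-γ)/(m+1-m*γ))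
    (hβ : β = 1/(m+1-m*γ))
    (hk : k = (m-1)/(m*(2-γ)*(m+1-m*γ)))
    (B : ℝ → ℝ → ℝ)
    (hB : ∀ y τ : ℝ, B y τ = τ ^ (-α) * (C - k * (y * τ ^ (-β)) ^ (2-γ)) ^ (1/(m-1))) :
    ∀ y τ : ℝ, 0 < y → 0 < τ → 0 < C - k * (y * τ ^ (-β)) ^ (2-γ) →
      y ^ (-γ) * deriv (fun s => B y s) τ = deriv (deriv (fun z => B z τ ^ m)) y := by
  have hm1 : (0:ℝ) < m - 1 := by linarith
  have hm0 : (0:ℝ) < m := by linarith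
  have hD : (0:ℝ) < m + 1 - m*γ := by
    have h := (lt_div_iff₀ hm0).mp hγ
    nlinarith
  have hp : (0:ℝ) < 2 - γ := by
    have h2 : (m+1)/m < 2 := by rw [div_lt_iff₀ hm0]; nlinarith
    linarith
  have hk0 : 0 < k := by
    rw [hk]; exact div_pos hm1 (mul_pos (mul_pos hm0 hp) hD)
  intro y τ hy hτ hpos
  set r : ℝ := 1/(m-1) with hr
  set q : ℝ := m/(m-1) with hq
  have hrw : ∀ z s : ℝ, 0 ≤ z → 0 < s →
      (z * s ^ (-β)) ^ (2-γ) = z ^ (2-γ) * s ^ (-(β*(2-γ))) := by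
    intro z s hz hs
    rw [Real.mul_rpow hz (Real.rpow_nonneg hs.le _), ← Real.rpow_mul hs.le, neg_mul]
  have hu : 0 < C - k * y^(2-γ) * τ^(-(β*(2-γ))) := by
    rw [hrw y τ hy.le hτ, ← mul_assoc] at hpos; exact hpos
  -- τ-derivative
  have h1 : HasDerivAt (fun s : ℝ => s ^ (-α)) (-α * τ^(-α-1)) τ :=
    Real.hasDerivAt_rpow_const (Or.inl hτ.ne')
  have h2 : HasDerivAt (fun s : ℝ => C - k * y^(2-γ) * s^(-(β*(2-γ))))
      (-(k * y^(2-γ) * (-(β*(2-γ)) * τ^(-(β*(2-γ))-1)))) τ :=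
    ((Real.hasDerivAt_rpow_const (Or.inl hτ.ne')).const_mul (k * y^(2-γ))).const_sub C
  have h3 : HasDerivAt (fun s : ℝ => (C - k * y^(2-γ) * s^(-(β*(2-γ))))^r)
      (-(k * y^(2-γ) * (-(β*(2-γ)) * τ^(-(β*(2-γ))-1))) * r
        * (C - k * y^(2-γ) * τ^(-(β*(2-γ))))^(r-1)) τ :=
    h2.rpow_const (Or.inl hu.ne')
  have hdτ : HasDerivAt (fun s : ℝ => s ^ (-α) * (C - k * y^(2-γ) * s^(-(β*(2-γ))))^r)
      (-α * τ^(-α-1) * (C - k * y^(2-γ) * τ^(-(β*(2-γ))))^r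
        + τ^(-α) * (-(k * y^(2-γ) * (-(β*(2-γ)) * τ^(-(β*(2-γ))-1))) * r
            * (C - k * y^(2-γ) * τ^(-(β*(2-γ))))^(r-1))) τ := h1.mul h3
  have hevτ : (fun s => B y s)
      =ᶠ[nhds τ] (fun s : ℝ => s ^ (-α) * (C - k * y^(2-γ) * s^(-(β*(2-γ))))^r) := by
    filter_upwards [Ioi_mem_nhds hτ] with s hs
    rw [hB, hrw y s hy.le hs, ← mul_assoc]
  have hDτval : deriv (fun s => B y s) τ
      = -α * τ^(-α-1) * (C - k * y^(2-γ) * τ^(-(β*(2-γ))))^r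
        + τ^(-α) * (-(k * y^(2-γ) * (-(β*(2-γ)) * τ^(-(β*(2-γ))-1))) * r
            * (C - k * y^(2-γ) * τ^(-(β*(2-γ))))^(r-1)) :=
    hevτ.deriv_eq.trans hdτ.deriv
  -- the open set S
  have hScont : ContinuousOn (fun z : ℝ => C - k * z^(2-γ) * τ^(-(β*(2-γ)))) (Ioi 0) := by
    intro z hz
    exact (continuousAt_const.sub
      ((continuousAt_const.mul
        (Real.continuousAt_rpow_const z (2-γ) (Or.inl (ne_of_gt (mem_Ioi.mp hz))))).mul
        continuousAt_const)).continuousWithinAt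
  have hSopen : IsOpen {z : ℝ | 0 < z ∧ 0 < C - k * z^(2-γ) * τ^(-(β*(2-γ)))} := by
    have hset : {z : ℝ | 0 < z ∧ 0 < C - k * z^(2-γ) * τ^(-(β*(2-γ)))}
        = Ioi 0 ∩ (fun z : ℝ => C - k * z^(2-γ) * τ^(-(β*(2-γ)))) ⁻¹' (Ioi 0) := rfl
    rw [hset]
    exact hScont.isOpen_inter_preimage isOpen_Ioi isOpen_Ioi
  have hmemS : {z : ℝ | 0 < z ∧ 0 < C - k * z^(2-γ) * τ^(-(β*(2-γ)))} ∈ nhds y :=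
    hSopen.mem_nhds ⟨hy, hu⟩
  -- F =ᶠ G
  have hFG : (fun z => B z τ ^ m)
      =ᶠ[nhds y] (fun z : ℝ => τ^(-(m*α)) * (C - k * z^(2-γ) * τ^(-(β*(2-γ))))^q) := by
    filter_upwards [hmemS] with z hz
    obtain ⟨hz0, hz1⟩ := hz
    rw [hB, hrw z τ hz0.le hτ, ← mul_assoc,
      Real.mul_rpow (Real.rpow_nonneg hτ.le _) (Real.rpow_nonneg hz1.le _),
      ← Real.rpow_mul hτ.le, ← Real.rpow_mul hz1.le,
      show -α*m = -(m*α) by ring, show r*m = q by rw [hr, hq]; ring]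
  -- derivative of G on S
  have hGz : ∀ z : ℝ, 0 < z → 0 < C - k * z^(2-γ) * τ^(-(β*(2-γ))) →
      HasDerivAt (fun z : ℝ => τ^(-(m*α)) * (C - k * z^(2-γ) * τ^(-(β*(2-γ))))^q)
        (τ^(-(m*α)) * (-(k * ((2-γ) * z^(2-γ-1)) * τ^(-(β*(2-γ)))) * q
          * (C - k * z^(2-γ) * τ^(-(β*(2-γ))))^(q-1))) z := by
    intro z hz0 hz1
    have hb : HasDerivAt (fun z : ℝ => C - k * z^(2-γ) * τ^(-(β*(2-γ))))
        (-(k * ((2-γ) * z^(2-γ-1)) * τ^(-(β*(2-γ))))) z :=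
      (((Real.hasDerivAt_rpow_const (Or.inl hz0.ne')).const_mul k).mul_const
        (τ^(-(β*(2-γ))))).const_sub C
    exact (hb.rpow_const (Or.inl hz1.ne')).const_mul (τ^(-(m*α)))
  have hderiv2 : deriv (fun z : ℝ => τ^(-(m*α)) * (C - k * z^(2-γ) * τ^(-(β*(2-γ))))^q)
      =ᶠ[nhds y] (fun z : ℝ => τ^(-(m*α)) * (-(k * ((2-γ) * z^(2-γ-1)) * τ^(-(β*(2-γ)))) * q
          * (C - k * z^(2-γ) * τ^(-(β*(2-γ))))^(q-1))) := by
    filter_upwards [hmemS] with z hz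
    exact (hGz z hz.1 hz.2).deriv
  -- second derivative value
  have hb2 : HasDerivAt (fun z : ℝ => C - k * z^(2-γ) * τ^(-(β*(2-γ))))
      (-(k * ((2-γ) * y^(2-γ-1)) * τ^(-(β*(2-γ))))) y :=
    (((Real.hasDerivAt_rpow_const (Or.inl hy.ne')).const_mul k).mul_const
      (τ^(-(β*(2-γ))))).const_sub C
  have hE : HasDerivAt (fun z : ℝ => (-(τ^(-(m*α)) * q * k * (2-γ) * τ^(-(β*(2-γ)))))
        * (z^(2-γ-1) * (C - k * z^(2-γ) * τ^(-(β*(2-γ))))^(q-1)))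
      ((-(τ^(-(m*α)) * q * k * (2-γ) * τ^(-(β*(2-γ)))))
        * ((2-γ-1) * y^(2-γ-1-1) * (C - k * y^(2-γ) * τ^(-(β*(2-γ))))^(q-1)
          + y^(2-γ-1) * (-(k * ((2-γ) * y^(2-γ-1)) * τ^(-(β*(2-γ)))) * (q-1)
            * (C - k * y^(2-γ) * τ^(-(β*(2-γ))))^(q-1-1)))) y :=
    ((Real.hasDerivAt_rpow_const (Or.inl hy.ne')).mul
      (hb2.rpow_const (Or.inl hu.ne'))).const_mul _
  have hsecond : deriv (deriv (fun z => B z τ ^ m)) y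
      = (-(τ^(-(m*α)) * q * k * (2-γ) * τ^(-(β*(2-γ)))))
        * ((2-γ-1) * y^(2-γ-1-1) * (C - k * y^(2-γ) * τ^(-(β*(2-γ))))^(q-1)
          + y^(2-γ-1) * (-(k * ((2-γ) * y^(2-γ-1)) * τ^(-(β*(2-γ)))) * (q-1)
            * (C - k * y^(2-γ) * τ^(-(β*(2-γ))))^(q-1-1))) := by
    have e1 := (hFG.deriv.trans hderiv2).deriv_eq
    rw [e1, show (fun z : ℝ => τ^(-(m*α)) * (-(k * ((2-γ) * z^(2-γ-1)) * τ^(-(β*(2-γ)))) * q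
          * (C - k * z^(2-γ) * τ^(-(β*(2-γ))))^(q-1)))
        = (fun z : ℝ => (-(τ^(-(m*α)) * q * k * (2-γ) * τ^(-(β*(2-γ)))))
          * (z^(2-γ-1) * (C - k * z^(2-γ) * τ^(-(β*(2-γ))))^(q-1))) from funext fun z => by ring]
    exact hE.deriv
  rw [hDτval, hsecond]
  have hτne : (τ:ℝ) ≠ 0 := hτ.ne'
  have hTpne : τ^(-(β*(2-γ))) ≠ 0 := (Real.rpow_pos_of_pos hτ _).ne'
  have hA1 : τ^(-α-1) = τ^(-α) * τ⁻¹ := by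
    rw [show -α-1 = -α + -1 by ring, Real.rpow_add hτ, Real.rpow_neg_one]
  have hA2 : τ^(-(β*(2-γ))-1) = τ^(-(β*(2-γ))) * τ⁻¹ := by
    rw [show -(β*(2-γ))-1 = -(β*(2-γ)) + -1 by ring, Real.rpow_add hτ, Real.rpow_neg_one]
  have hA3 : τ^(-(m*α)) = τ^(-α) * τ⁻¹ * (τ^(-(β*(2-γ))))⁻¹ := by
    have he : -(m*α) = -α + -1 + β*(2-γ) := by
      rw [hα, hβ]; field_simp; ring
    rw [he, Real.rpow_add hτ, Real.rpow_add hτ, Real.rpow_neg_one,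
      show τ^(β*(2-γ)) = (τ^(-(β*(2-γ))))⁻¹ by rw [Real.rpow_neg hτ.le, inv_inv]]
  have hA4 : y^((2:ℝ)-γ) = y * y * y^(-γ) := by
    rw [show (2:ℝ)-γ = 1 + 1 + -γ by ring, Real.rpow_add hy, Real.rpow_add hy, Real.rpow_one]
  have hA5 : y^((2:ℝ)-γ-1) = y * y^(-γ) := by
    rw [show (2:ℝ)-γ-1 = 1 + -γ by ring, Real.rpow_add hy, Real.rpow_one]
  have hA6 : y^((2:ℝ)-γ-1-1) = y^(-γ) := by
    congr 1; ring
  have hA7 : (C - k * y^((2:ℝ)-γ) * τ^(-(β*(2-γ))))^(q-1)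
      = (C - k * y^((2:ℝ)-γ) * τ^(-(β*(2-γ))))^r := by
    congr 1; rw [hq, hr]; field_simp; ring
  have hA8 : (C - k * y^((2:ℝ)-γ) * τ^(-(β*(2-γ))))^(q-1-1)
      = (C - k * y^((2:ℝ)-γ) * τ^(-(β*(2-γ))))^(r-1) := by
    congr 1; rw [hq, hr]; field_simp; ring
  have hc1 : α = β*(1-γ) := by rw [hα, hβ]; ring
  have hc2 : β = q*k*(2-γ) := by
    rw [hβ, hq, hk]; field_simp
  have hc3 : q = r + 1 := by rw [hq, hr]; field_simp; ring
  rw [hA7, hA8, hA6, hA5, hA4, hA1, hA2, hA3, hc1, hc2, hc3]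
  field_simp
  ring
end

section
/- Let m > 1, K = 2m(m+1)/(3m+1)², λ₁ = (−1 − √(1−4K))/2, λ = √(1−4K) (so that λ = (m−1)/(3m+1)), k = (m−1)/(2m(m+1)), C > 0 and x₀ ∈ ℝ. Define u(x,t) = λ^{−2/(m+1)} · t^{−1/(m+1)} · e^{λ₁ x/m} · ( C − k·( (e^{λx} − e^{λx₀}) / (t^{1/(m+1)} λ^{2/(m+1)}) )² )^{1/(m−1)}. Then at every point (x,t) with t > 0 and C − k·( (e^{λx} − e^{λx₀}) / (t^{1/(m+1)} λ^{2/(m+1)}) )² > 0, the function u satisfies u_t = (u^m)_{xx} + (u^m)_x + K·u^m. -/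
open Real Filter Topology

/-!
Substituting `u(x,t) = e^{l₁x/m} w(e^{lx} - e^{lx₀}, l²t)` turns the equation into the porous medium
equation `w_τ = (w^m)_ξξ`: since `l₁ = (-1-l)/2` is a root of `r² + r + K = 0`, the zeroth- and
first-order terms in `w^m` cancel, and `l₁/m = l₁ + 2l` makes the exponential weights of both sides
agree. Here `w` is the Barenblatt solution `τ^{-α} F(ξ/τ^α)`, `α = 1/(m+1)`, and it solves the porous
medium equation because both `w_τ` and `(w^m)_ξξ` equal `-α(w + ξ w_ξ)/τ`: the first by
self-similarity, the second because the profile satisfies `(F^m)' = -α y F`.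
-/

theorem sq_mul_rpow {l s : ℝ} (hs : 0 ≤ s) (p : ℝ) : (l ^ 2 * s) ^ p = |l| ^ (2 * p) * s ^ p := by
  rw [mul_rpow (by positivity) hs, ← sq_abs, ← rpow_natCast_mul (abs_nonneg l)]
  norm_num

noncomputable def selfSimilar (α : ℝ) (F : ℝ → ℝ) (ξ τ : ℝ) : ℝ :=
  τ ^ (-α) * F (ξ / τ ^ α)

section SelfSimilar

variable {α : ℝ} {F : ℝ → ℝ} {F' ξ τ : ℝ}

theorem hasDerivAt_selfSimilar_space (hF : HasDerivAt F F' (ξ / τ ^ α)) :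
    HasDerivAt (selfSimilar α F · τ) (τ ^ (-α) * (F' / τ ^ α)) ξ :=
  (hF.comp ξ ((hasDerivAt_id ξ).div_const _)).const_mul _ |>.congr_deriv (by ring)

theorem hasDerivAt_selfSimilar_time (hτ : 0 < τ) (hF : HasDerivAt F F' (ξ / τ ^ α)) :
    HasDerivAt (selfSimilar α F ξ)
      (-(α / τ) * (selfSimilar α F ξ τ + ξ * (τ ^ (-α) * (F' / τ ^ α)))) τ := by
  have hpow : ∀ β : ℝ, HasDerivAt (· ^ β) (β * (τ ^ β / τ)) τ := fun β => by
    simpa [rpow_sub_one hτ.ne'] using hasDerivAt_rpow_const (p := β) (Or.inl hτ.ne')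
  have hτα : τ ^ α ≠ 0 := (rpow_pos_of_pos hτ α).ne'
  refine ((hpow (-α)).mul (hF.comp τ ((hasDerivAt_const τ ξ).div (hpow α) hτα))).congr_deriv ?_
  simp only [selfSimilar, rpow_neg hτ.le, Function.comp_apply, Pi.div_apply]
  field_simp
  ring

theorem hasDerivAt_selfSimilar_rpow_space {m : ℝ} (hm : 1 ≤ m) (hαm : (m + 1) * α = 1)
    (hτ : 0 < τ) (hF0 : 0 ≤ F (ξ / τ ^ α)) (hF : HasDerivAt F F' (ξ / τ ^ α))
    (hflux : m * F (ξ / τ ^ α) ^ (m - 1) * F' = -(α * (ξ / τ ^ α) * F (ξ / τ ^ α))) :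
    HasDerivAt (fun ξ => selfSimilar α F ξ τ ^ m) (-(α / τ) * (ξ * selfSimilar α F ξ τ)) ξ := by
  refine ((hasDerivAt_selfSimilar_space hF).rpow_const (Or.inr hm)).congr_deriv ?_
  have hneg : τ ^ (-α) = (τ ^ α)⁻¹ := rpow_neg hτ.le α
  have hscale : τ ^ (-α) * (τ ^ (-α)) ^ (m - 1) / τ ^ α = τ⁻¹ := by
    rw [div_eq_mul_inv, ← hneg, ← rpow_mul hτ.le, ← rpow_add hτ, ← rpow_add hτ, ← rpow_neg_one]
    congr 1
    linear_combination -hαm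
  simp only [selfSimilar]
  rw [mul_rpow (rpow_nonneg hτ.le _) hF0]
  linear_combination (τ ^ (-α) * (τ ^ (-α)) ^ (m - 1) / τ ^ α) * hflux
    - α * (ξ / τ ^ α) * F (ξ / τ ^ α) * hscale + α * ξ * F (ξ / τ ^ α) / τ * hneg

end SelfSimilar

noncomputable def barenblattProfile (m C y : ℝ) : ℝ :=
  (C - (m - 1) / (2 * m * (m + 1)) * y ^ 2) ^ (1 / (m - 1))

noncomputable def barenblatt (m C : ℝ) : ℝ → ℝ → ℝ :=
  selfSimilar (1 / (m + 1)) (barenblattProfile m C)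

section Barenblatt

variable {m C y ξ τ : ℝ}

theorem barenblatt_nonneg (hτ : 0 ≤ τ)
    (hG : 0 ≤ C - (m - 1) / (2 * m * (m + 1)) * (ξ / τ ^ (1 / (m + 1))) ^ 2) :
    0 ≤ barenblatt m C ξ τ :=
  mul_nonneg (rpow_nonneg hτ _) (rpow_nonneg hG _)

theorem barenblatt_sq_mul {l s : ℝ} (hl : 0 < l) (hs : 0 < s) :
    barenblatt m C ξ (l ^ 2 * s) = l ^ (-2 / (m + 1)) * s ^ (-1 / (m + 1)) *
      (C - (m - 1) / (2 * m * (m + 1)) * (ξ / (s ^ (1 / (m + 1)) * l ^ (2 / (m + 1)))) ^ 2) ^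
        (1 / (m - 1)) := by
  rw [barenblatt, selfSimilar, barenblattProfile, sq_mul_rpow hs.le, sq_mul_rpow hs.le,
    abs_of_pos hl]
  ring_nf

theorem hasDerivAt_barenblattProfile (hm : 1 < m)
    (hy : 0 < C - (m - 1) / (2 * m * (m + 1)) * y ^ 2) :
    HasDerivAt (barenblattProfile m C)
      (-(y / (m * (m + 1))) * (C - (m - 1) / (2 * m * (m + 1)) * y ^ 2) ^ (1 / (m - 1) - 1)) y := by
  have hinner : HasDerivAt (fun y => C - (m - 1) / (2 * m * (m + 1)) * y ^ 2)
      (-((m - 1) / (2 * m * (m + 1)) * (2 * y))) y := by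
    simpa using ((hasDerivAt_pow 2 y).const_mul ((m - 1) / (2 * m * (m + 1)))).const_sub C
  refine (hinner.rpow_const (Or.inl hy.ne')).congr_deriv ?_
  have : m - 1 ≠ 0 := by linarith
  have : m ≠ 0 := by linarith
  have : m + 1 ≠ 0 := by linarith
  field_simp

theorem barenblattProfile_flux (hm : 1 < m) (hy : 0 < C - (m - 1) / (2 * m * (m + 1)) * y ^ 2) :
    m * barenblattProfile m C y ^ (m - 1) *
        (-(y / (m * (m + 1))) * (C - (m - 1) / (2 * m * (m + 1)) * y ^ 2) ^ (1 / (m - 1) - 1)) =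
      -(1 / (m + 1) * y * barenblattProfile m C y) := by
  have hm1 : m - 1 ≠ 0 := by linarith
  have hpow : barenblattProfile m C y ^ (m - 1) = C - (m - 1) / (2 * m * (m + 1)) * y ^ 2 := by
    rw [barenblattProfile, ← rpow_mul hy.le, one_div_mul_cancel hm1, rpow_one]
  rw [hpow, rpow_sub_one hy.ne', barenblattProfile]
  generalize C - (m - 1) / (2 * m * (m + 1)) * y ^ 2 = G at hy ⊢
  have : m ≠ 0 := by linarith
  have : m + 1 ≠ 0 := by linarith
  field_simp

theorem hasDerivAt_barenblatt_rpow_space (hm : 1 < m) (hτ : 0 < τ)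
    (hG : 0 < C - (m - 1) / (2 * m * (m + 1)) * (ξ / τ ^ (1 / (m + 1))) ^ 2) :
    HasDerivAt (fun ξ => barenblatt m C ξ τ ^ m)
      (-(1 / (m + 1) / τ) * (ξ * barenblatt m C ξ τ)) ξ :=
  hasDerivAt_selfSimilar_rpow_space hm.le (by field_simp [show m + 1 ≠ 0 by linarith]) hτ
    (rpow_nonneg hG.le _) (hasDerivAt_barenblattProfile hm hG) (barenblattProfile_flux hm hG)

/-- The flux function here is `(w^m)_ξ` by `hasDerivAt_barenblatt_rpow_space`, so this is the porous
medium equation `w_τ = (w^m)_ξξ`. -/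
theorem barenblatt_porousMedium (hm : 1 < m) (hτ : 0 < τ)
    (hG : 0 < C - (m - 1) / (2 * m * (m + 1)) * (ξ / τ ^ (1 / (m + 1))) ^ 2) :
    ∃ w', HasDerivAt (fun ξ => -(1 / (m + 1) / τ) * (ξ * barenblatt m C ξ τ)) w' ξ ∧
      HasDerivAt (barenblatt m C ξ) w' τ :=
  have hF := hasDerivAt_barenblattProfile hm hG
  ⟨_, (((hasDerivAt_id' ξ).mul (hasDerivAt_selfSimilar_space hF)).const_mul _),
    hasDerivAt_selfSimilar_time hτ hF |>.congr_deriv (by ring)⟩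

end Barenblatt

theorem deriv_deriv_add_deriv_add_mul_of_eventuallyEq_exp_mul_comp
    {U W W' : ℝ → ℝ} {W'' a c b K x : ℝ}
    (ha : a ^ 2 + a + K = 0) (hc : 2 * a + c + 1 = 0)
    (hU : U =ᶠ[𝓝 x] fun z => exp (a * z) * W (exp (c * z) - b))
    (hW : ∀ᶠ z in 𝓝 x, HasDerivAt W (W' (exp (c * z) - b)) (exp (c * z) - b))
    (hW' : HasDerivAt W' W'' (exp (c * x) - b)) :
    deriv (deriv U) x + deriv U x + K * U x =
      c ^ 2 * exp ((a + 2 * c) * x) * W'' := by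
  have hexp : ∀ (r z : ℝ), HasDerivAt (fun z => exp (r * z)) (r * exp (r * z)) z := fun r z => by
    simpa [mul_comm] using ((hasDerivAt_id z).const_mul r).exp
  have hinner : ∀ z, HasDerivAt (fun z => exp (c * z) - b) (c * exp (c * z)) z :=
    fun z => (hexp c z).sub_const b
  have hU' : deriv U =ᶠ[𝓝 x] fun z =>
      exp (a * z) * (a * W (exp (c * z) - b) + c * exp (c * z) * W' (exp (c * z) - b)) := by
    filter_upwards [hU.eventuallyEq_nhds, hW] with z hUz hWz
    refine (((hexp a z).mul (hWz.comp z (hinner z))).congr_of_eventuallyEq hUz).deriv.trans ?_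
    simp only [Function.comp_apply]
    ring
  have hU'' := ((hexp a x).mul (((hW.self_of_nhds.comp x (hinner x)).const_mul a).add
    (((hexp c x).const_mul c).mul (hW'.comp x (hinner x))))).congr_of_eventuallyEq hU'
  have hsplit : exp ((a + 2 * c) * x) = exp (a * x) * exp (c * x) ^ 2 := by
    rw [sq, ← exp_add, ← exp_add]
    ring_nf
  rw [hU''.deriv, hU'.eq_of_nhds, hU.eq_of_nhds, hsplit]
  simp only [Function.comp_apply, Pi.add_apply, Pi.mul_apply]
  linear_combination exp (a * x) * W (exp (c * x) - b) * ha
    + c * exp (a * x) * exp (c * x) * W' (exp (c * x) - b) * hc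

theorem stmt11_general
    (m : ℝ) (hm : 1 < m)
    (K : ℝ) (hK : K = 2*m*(m+1)/(3*m+1)^2)
    (l₁ l : ℝ)
    (hl₁ : l₁ = (-1 - Real.sqrt (1 - 4*K))/2)
    (hl : l = Real.sqrt (1 - 4*K))
    (hlval : l = (m-1)/(3*m+1))
    (k : ℝ) (hk : k = (m-1)/(2*m*(m+1)))
    (C x₀ : ℝ)
    (u : ℝ → ℝ → ℝ)
    (hu : ∀ x t : ℝ, u x t =
      l ^ (-2/(m+1)) * t ^ (-1/(m+1)) * Real.exp (l₁*x/m) *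
        (C - k * ((Real.exp (l*x) - Real.exp (l*x₀)) /
          (t ^ (1/(m+1)) * l ^ (2/(m+1))))^2) ^ (1/(m-1))) :
    ∀ x t : ℝ, 0 < t →
      0 < C - k * ((Real.exp (l*x) - Real.exp (l*x₀)) /
        (t ^ (1/(m+1)) * l ^ (2/(m+1))))^2 →
      deriv (fun s => u x s) t =
        deriv (deriv (fun z => u z t ^ m)) x
          + deriv (fun z => u z t ^ m) x + K * u x t ^ m := by
  intro x t ht hg
  have h3m : 3 * m + 1 ≠ 0 := by linarith
  have hl₁' : l₁ = (-1 - l) / 2 := by rw [hl₁, hl]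
  have hl₁K : l₁ ^ 2 + l₁ + K = 0 := by rw [hl₁', hK, hlval]; field_simp; ring
  have hl₁l : 2 * l₁ + l + 1 = 0 := by rw [hl₁']; ring
  have hl₁m : l₁ * x / m = (l₁ + 2 * l) * x := by
    rw [hl₁', hlval]; field_simp [show m ≠ 0 by linarith]; ring
  have hlpos : 0 < l := by rw [hlval]; exact div_pos (by linarith) (by linarith)
  have hτ : 0 < l ^ 2 * t := by positivity
  have hu' : ∀ z s, 0 < s →
      u z s = exp (l₁ * z / m) * barenblatt m C (exp (l * z) - exp (l * x₀)) (l ^ 2 * s) := by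
    intro z s hs
    rw [hu, barenblatt_sq_mul hlpos hs, hk]
    ring
  rw [show t ^ (1/(m+1)) * l ^ (2/(m+1)) = (l ^ 2 * t) ^ (1/(m+1)) by
    rw [sq_mul_rpow ht.le, abs_of_pos hlpos, mul_one_div, mul_comm], hk] at hg
  obtain ⟨w', hflux, htime⟩ := barenblatt_porousMedium hm hτ hg
  have hut : HasDerivAt (fun s => u x s) (exp (l₁ * x / m) * (w' * (l ^ 2 * 1))) t :=
    ((htime.comp t ((hasDerivAt_id' t).const_mul _)).const_mul _).congr_of_eventuallyEq
      (by filter_upwards [lt_mem_nhds ht] with s hs using hu' x s hs)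
  have hpos : ∀ᶠ z in 𝓝 x, 0 < C - (m - 1) / (2 * m * (m + 1)) *
      ((exp (l * z) - exp (l * x₀)) / (l ^ 2 * t) ^ (1 / (m + 1))) ^ 2 :=
    continuousAt_const.eventually_lt (by fun_prop) hg
  have hspace := deriv_deriv_add_deriv_add_mul_of_eventuallyEq_exp_mul_comp
    (U := fun z => u z t ^ m) (W := fun ξ => barenblatt m C ξ (l ^ 2 * t) ^ m) (b := exp (l * x₀))
    hl₁K hl₁l ?_ ?_ hflux
  · rw [hut.deriv, hspace, hl₁m]
    ring
  · filter_upwards [hpos] with z hz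
    rw [hu' z t ht, mul_rpow (exp_pos _).le (barenblatt_nonneg hτ.le hz.le), ← exp_mul,
      div_mul_cancel₀ _ (by linarith)]
  · filter_upwards [hpos] with z hz using hasDerivAt_barenblatt_rpow_space hm hτ hz

/-- the explicit function obtained from the translated Barenblatt
solution,
`u(x,t) = λ^{-2/(m+1)} t^{-1/(m+1)} e^{λ₁x/m} (C - k((e^{λx}-e^{λx₀})/(t^{1/(m+1)} λ^{2/(m+1)}))²)^{1/(m-1)}`,
satisfies `u_t = (u^m)_{xx} + (u^m)_x + K u^m` (with `K = 2m(m+1)/(3m+1)²`)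
at every point where `t > 0` and the parenthesis is positive. -/
theorem stmt11
    (m : ℝ) (hm : 1 < m)
    (K : ℝ) (hK : K = 2*m*(m+1)/(3*m+1)^2)
    (l₁ l : ℝ)
    (hl₁ : l₁ = (-1 - Real.sqrt (1 - 4*K))/2)
    (hl : l = Real.sqrt (1 - 4*K))
    (hlval : l = (m-1)/(3*m+1))
    (k : ℝ) (hk : k = (m-1)/(2*m*(m+1)))
    (C x₀ : ℝ) (hC : 0 < C)
    (u : ℝ → ℝ → ℝ)
    (hu : ∀ x t : ℝ, u x t =
      l ^ (-2/(m+1)) * t ^ (-1/(m+1)) * Real.exp (l₁*x/m) *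
        (C - k * ((Real.exp (l*x) - Real.exp (l*x₀)) /
          (t ^ (1/(m+1)) * l ^ (2/(m+1))))^2) ^ (1/(m-1))) :
    ∀ x t : ℝ, 0 < t →
      0 < C - k * ((Real.exp (l*x) - Real.exp (l*x₀)) /
        (t ^ (1/(m+1)) * l ^ (2/(m+1))))^2 →
      deriv (fun s => u x s) t =
        deriv (deriv (fun z => u z t ^ m)) x
          + deriv (fun z => u z t ^ m) x + K * u x t ^ m :=
  stmt11_general m hm K hK l₁ l hl₁ hl hlval k hk C x₀ u hu
end

section
/- Let m > 1, λ₁ = (−1 − √(1−4K))/2 with K = 2m(m+1)/(3m+1)², λ = (m−1)/(3m+1), k = (m−1)/(2m(m+1)), C > 0, x₀ ∈ ℝ, and define for t > 0: u(x,t) = λ^{−2/(m+1)} · t^{−1/(m+1)} · e^{λ₁ x/m} · max(0, C − k·( (e^{λx} − e^{λx₀}) / (t^{1/(m+1)} λ^{2/(m+1)}) )² )^{1/(m−1)}, and let T = ( e^{λx₀} / ( λ^{2/(m+1)} √(C/k) ) )^{m+1}. Then: (i) for every t ∈ (0,T) there exist real numbers A < B such that u(x,t) = 0 whenever x ∉ [A,B],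 and the function x ↦ u(x,t) is bounded on ℝ; (ii) u(x,T) → +∞ as x → −∞. -/
open Real Set Filter

set_option maxHeartbeats 1000000

/-- the explicit compactly supported solution
`u(x,t) = λ^{-2/(m+1)} t^{-1/(m+1)} e^{λ₁x/m} max(0, C - k((e^{λx}-e^{λx₀})/(t^{1/(m+1)} λ^{2/(m+1)}))²)^{1/(m-1)}`
with blow-up time `T = (e^{λx₀}/(λ^{2/(m+1)} √(C/k)))^{m+1}`: for `0 < t < T` it is
compactly supported and bounded, and at `t = T` it blows up as `x → -∞`. -/
theorem stmt12
    (m : ℝ) (hm : 1 < m)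
    (K : ℝ) (hK : K = 2*m*(m+1)/(3*m+1)^2)
    (l₁ l : ℝ)
    (hl₁ : l₁ = (-1 - Real.sqrt (1 - 4*K))/2)
    (hl : l = (m-1)/(3*m+1))
    (k : ℝ) (hk : k = (m-1)/(2*m*(m+1)))
    (C x₀ : ℝ) (hC : 0 < C)
    (u : ℝ → ℝ → ℝ)
    (hu : ∀ x t : ℝ, 0 < t → u x t =
      l ^ (-2/(m+1)) * t ^ (-1/(m+1)) * Real.exp (l₁*x/m) *
        (max 0 (C - k * ((Real.exp (l*x) - Real.exp (l*x₀)) /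
          (t ^ (1/(m+1)) * l ^ (2/(m+1))))^2)) ^ (1/(m-1)))
    (T : ℝ)
    (hT : T = (Real.exp (l*x₀) / (l ^ (2/(m+1)) * Real.sqrt (C/k))) ^ (m+1)) :
    (∀ t ∈ Ioo 0 T,
      (∃ A B : ℝ, A < B ∧ ∀ x : ℝ, x ∉ Icc A B → u x t = 0) ∧
      (∃ M : ℝ, ∀ x : ℝ, |u x t| ≤ M)) ∧
    Tendsto (fun x => u x T) atBot atTop := by
  have hm1 : (0:ℝ) < m - 1 := by linarith
  have hm3 : (0:ℝ) < 3*m+1 := by linarith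
  have hmp : (0:ℝ) < m+1 := by linarith
  have hm0 : (0:ℝ) < m := by linarith
  have hl0 : 0 < l := by rw [hl]; positivity
  have hk0 : 0 < k := by rw [hk]; positivity
  have hCk : 0 < C/k := div_pos hC hk0
  have hp : 0 < 1/(m-1) := by positivity
  have hsqrt : Real.sqrt (1 - 4*K) = l := by
    have h1 : 1 - 4*K = l^2 := by
      rw [hK, hl]; field_simp; ring
    rw [h1, Real.sqrt_sq hl0.le]
  have hl₁' : l₁ = -(2*m)/(3*m+1) := by
    rw [hl₁, hsqrt, hl]; field_simp; ring
  have hl₁neg : l₁ < 0 := by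
    rw [hl₁']
    apply div_neg_of_neg_of_pos <;> linarith
  have hE : (0:ℝ) < Real.exp (l*x₀) := Real.exp_pos _
  have hLp : 0 < l ^ (2/(m+1)) := Real.rpow_pos_of_pos hl0 _
  have hS : 0 < Real.sqrt (C/k) := Real.sqrt_pos.2 hCk
  have hTbase : 0 < Real.exp (l*x₀) / (l ^ (2/(m+1)) * Real.sqrt (C/k)) := by positivity
  have hT0 : 0 < T := by rw [hT]; exact Real.rpow_pos_of_pos hTbase _
  have hTr : T ^ (1/(m+1)) = Real.exp (l*x₀) / (l ^ (2/(m+1)) * Real.sqrt (C/k)) := by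
    rw [hT, ← Real.rpow_mul hTbase.le, mul_one_div, div_self hmp.ne', Real.rpow_one]
  have hRT : T ^ (1/(m+1)) * l ^ (2/(m+1)) * Real.sqrt (C/k) = Real.exp (l*x₀) := by
    rw [hTr]; field_simp
  constructor
  · rintro t ⟨ht0, htT⟩
    have hDt0 : 0 < t ^ (1/(m+1)) * l ^ (2/(m+1)) := by positivity
    set Dt := t ^ (1/(m+1)) * l ^ (2/(m+1)) with hDtdef
    set Rt := Dt * Real.sqrt (C/k) with hRtdef
    set E := Real.exp (l*x₀) with hEdef
    have hRt0 : 0 < Rt := by positivity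
    have hRtE : Rt < E := by
      have h1 : t ^ (1/(m+1)) < T ^ (1/(m+1)) :=
        Real.rpow_lt_rpow ht0.le htT (by positivity)
      calc Rt = t^(1/(m+1)) * (l^(2/(m+1)) * Real.sqrt (C/k)) := by
            rw [hRtdef, hDtdef]; ring
        _ < T^(1/(m+1)) * (l^(2/(m+1)) * Real.sqrt (C/k)) := by
            exact mul_lt_mul_of_pos_right h1 (by positivity)
        _ = E := by rw [← hRT]; ring
    have hEm : 0 < E - Rt := by linarith
    have hzero : ∀ x : ℝ, Rt ≤ |Real.exp (l*x) - E| → u x t = 0 := by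
      intro x hx
      have hsq2 : Rt^2 ≤ (Real.exp (l*x) - E)^2 := by
        have h := sq_abs (Real.exp (l*x) - E)
        nlinarith [abs_nonneg (Real.exp (l*x) - E)]
      have hR2 : Rt^2 = Dt^2 * (C/k) := by
        rw [hRtdef, mul_pow, Real.sq_sqrt hCk.le]
      have hinner : C - k * ((Real.exp (l*x) - E)/Dt)^2 ≤ 0 := by
        rw [div_pow, sub_nonpos]
        rw [mul_div_assoc', le_div_iff₀ (by positivity)]
        calc C * Dt^2 = k * (Dt^2 * (C/k)) := by field_simp
          _ = k * Rt^2 := by rw [hR2]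
          _ ≤ k * (Real.exp (l*x) - E)^2 := by nlinarith
      rw [hRtdef, hDtdef] at hsq2
      rw [hDtdef, hEdef] at hinner
      rw [hu x t ht0, max_eq_left hinner,
        Real.zero_rpow (ne_of_gt hp), mul_zero]
    set A := Real.log (E - Rt) / l with hA
    set B := Real.log (E + Rt) / l with hB
    have hAB : A < B := by
      rw [hA, hB]
      exact (div_lt_div_iff_of_pos_right hl0).2 (Real.log_lt_log hEm (by linarith))
    have hout : ∀ x : ℝ, x ∉ Icc A B → u x t = 0 := by
      intro x hx
      rw [mem_Icc, not_and_or, not_le, not_le] at hx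
      apply hzero
      rcases hx with hx | hx
      · have h1 : l*x < Real.log (E - Rt) := by
          rw [hA] at hx
          calc l*x = x*l := by ring
            _ < Real.log (E - Rt) := by exact (lt_div_iff₀ hl0).1 hx
        have h2 : Real.exp (l*x) < E - Rt := by
          calc Real.exp (l*x) < Real.exp (Real.log (E - Rt)) := Real.exp_lt_exp.2 h1
            _ = E - Rt := Real.exp_log hEm
        calc Rt ≤ -(Real.exp (l*x) - E) := by linarith
          _ ≤ |Real.exp (l*x) - E| := neg_le_abs _
      · have h1 : Real.log (E + Rt) < l*x := by
          rw [hB] at hx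
          calc Real.log (E + Rt) < x*l := by exact (div_lt_iff₀ hl0).1 hx
            _ = l*x := by ring
        have h2 : E + Rt < Real.exp (l*x) := by
          calc E + Rt = Real.exp (Real.log (E + Rt)) := (Real.exp_log (by positivity)).symm
            _ < Real.exp (l*x) := Real.exp_lt_exp.2 h1
        calc Rt ≤ Real.exp (l*x) - E := by linarith
          _ ≤ |Real.exp (l*x) - E| := le_abs_self _
    refine ⟨⟨A, B, hAB, hout⟩, ?_⟩
    -- boundedness
    refine ⟨l ^ (-2/(m+1)) * t ^ (-1/(m+1)) * Real.exp (l₁*A/m) * C ^ (1/(m-1)), ?_⟩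
    intro x
    have hM0 : 0 < l ^ (-2/(m+1)) * t ^ (-1/(m+1)) * Real.exp (l₁*A/m) * C ^ (1/(m-1)) := by
      positivity
    have hun : 0 ≤ u x t := by
      rw [hu x t ht0]; positivity
    rw [abs_of_nonneg hun]
    by_cases hmem : x ∈ Icc A B
    · rw [hu x t ht0]
      have hxA : A ≤ x := hmem.1
      have hexp : Real.exp (l₁*x/m) ≤ Real.exp (l₁*A/m) := by
        apply Real.exp_le_exp.2
        exact (div_le_div_iff_of_pos_right hm0).2 (mul_le_mul_of_nonpos_left hxA hl₁neg.le)
      have hmaxle : (max 0 (C - k * ((Real.exp (l*x) - Real.exp (l*x₀)) /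
          (t ^ (1/(m+1)) * l ^ (2/(m+1))))^2)) ^ (1/(m-1)) ≤ C ^ (1/(m-1)) := by
        apply Real.rpow_le_rpow (le_max_left _ _) ?_ hp.le
        apply max_le hC.le
        have : 0 ≤ k * ((Real.exp (l*x) - Real.exp (l*x₀)) /
            (t ^ (1/(m+1)) * l ^ (2/(m+1))))^2 := by positivity
        linarith
      have hmax0 : 0 ≤ (max 0 (C - k * ((Real.exp (l*x) - Real.exp (l*x₀)) /
          (t ^ (1/(m+1)) * l ^ (2/(m+1))))^2)) ^ (1/(m-1)) :=
        Real.rpow_nonneg (le_max_left _ _) _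
      calc l ^ (-2/(m+1)) * t ^ (-1/(m+1)) * Real.exp (l₁*x/m) *
          (max 0 (C - k * ((Real.exp (l*x) - Real.exp (l*x₀)) /
            (t ^ (1/(m+1)) * l ^ (2/(m+1))))^2)) ^ (1/(m-1))
          ≤ l ^ (-2/(m+1)) * t ^ (-1/(m+1)) * Real.exp (l₁*A/m) *
            (max 0 (C - k * ((Real.exp (l*x) - Real.exp (l*x₀)) /
            (t ^ (1/(m+1)) * l ^ (2/(m+1))))^2)) ^ (1/(m-1)) := by
            apply mul_le_mul_of_nonneg_right ?_ hmax0
            apply mul_le_mul_of_nonneg_left hexp (by positivity)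
        _ ≤ l ^ (-2/(m+1)) * t ^ (-1/(m+1)) * Real.exp (l₁*A/m) * C ^ (1/(m-1)) := by
            apply mul_le_mul_of_nonneg_left hmaxle (by positivity)
    · rw [hout x hmem]; exact hM0.le
  · -- blow-up at t = T
    set p := 1/(m-1) with hpdef
    set P := l ^ (-2/(m+1)) * T ^ (-1/(m+1)) with hPdef
    have hP0 : 0 < P := by rw [hPdef]; positivity
    set c₂ := P * C ^ p * Real.exp ((-(l*x₀))*p) with hc2def
    have hc20 : 0 < c₂ := by rw [hc2def]; positivity
    have hDT0 : 0 < T ^ (1/(m+1)) * l ^ (2/(m+1)) := by positivity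
    have hkE : k * (Real.exp (l*x₀))^2 = C * (T ^ (1/(m+1)) * l ^ (2/(m+1)))^2 := by
      have h := hRT
      have h2 : (T ^ (1/(m+1)) * l ^ (2/(m+1)))^2 * (C/k) = (Real.exp (l*x₀))^2 := by
        rw [← Real.sq_sqrt hCk.le, ← mul_pow, h]
      field_simp at h2
      nlinarith [h2]
    have hlow : ∀ x : ℝ, x < x₀ → c₂ * Real.exp (-x/(3*m+1)) ≤ u x T := by
      intro x hx
      set q := Real.exp (l*(x-x₀)) with hqdef
      have hq0 : 0 < q := Real.exp_pos _
      have hq1 : q < 1 := by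
        rw [hqdef]
        apply Real.exp_lt_one_iff.mpr
        exact mul_neg_of_pos_of_neg hl0 (by linarith)
      have hEq : Real.exp (l*x) = Real.exp (l*x₀) * q := by
        rw [hqdef, ← Real.exp_add]; congr 1; ring
      -- inner value
      have key : k * ((Real.exp (l*x) - Real.exp (l*x₀)) /
          (T ^ (1/(m+1)) * l ^ (2/(m+1))))^2 = C * (q-1)^2 := by
        rw [hEq]
        field_simp
        linear_combination (q-1)^2 * hkE
      have hinner : C * q ≤ C - k * ((Real.exp (l*x) - Real.exp (l*x₀)) /
          (T ^ (1/(m+1)) * l ^ (2/(m+1))))^2 := by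
        rw [key]
        nlinarith [mul_nonneg (mul_nonneg hC.le hq0.le) (sub_nonneg.2 hq1.le)]
      have hCq0 : 0 ≤ C * q := by positivity
      have hle : (C*q) ^ p ≤ (max 0 (C - k * ((Real.exp (l*x) - Real.exp (l*x₀)) /
          (T ^ (1/(m+1)) * l ^ (2/(m+1))))^2)) ^ p := by
        apply Real.rpow_le_rpow hCq0 ?_ hp.le
        exact le_trans hinner (le_max_right _ _)
      have hqp : q ^ p = Real.exp ((l*(x-x₀))*p) := by
        rw [hqdef, Real.rpow_def_of_pos (Real.exp_pos _), Real.log_exp]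
      have hexpid : l₁*x/m + (l*(x-x₀))*p = (-(l*x₀))*p + (-x/(3*m+1)) := by
        rw [hpdef, hl₁', hl]; field_simp; ring
      have heq : c₂ * Real.exp (-x/(3*m+1)) =
          P * Real.exp (l₁*x/m) * (C*q) ^ p := by
        rw [Real.mul_rpow hC.le hq0.le, hqp, hc2def]
        calc P * C ^ p * Real.exp ((-(l*x₀))*p) * Real.exp (-x/(3*m+1))
            = P * C ^ p * Real.exp ((-(l*x₀))*p + (-x/(3*m+1))) := by
              rw [Real.exp_add]; ring
          _ = P * C ^ p * Real.exp (l₁*x/m + (l*(x-x₀))*p) := by rw [hexpid]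
          _ = P * Real.exp (l₁*x/m) * (C ^ p * Real.exp ((l*(x-x₀))*p)) := by
              rw [Real.exp_add]; ring
      rw [heq, hu x T hT0, ← hPdef]
      calc P * Real.exp (l₁*x/m) * (C*q) ^ p
          ≤ P * Real.exp (l₁*x/m) * (max 0 (C - k * ((Real.exp (l*x) - Real.exp (l*x₀)) /
            (T ^ (1/(m+1)) * l ^ (2/(m+1))))^2)) ^ p := by
            apply mul_le_mul_of_nonneg_left hle (by positivity)
        _ = P * Real.exp (l₁*x/m) * (max 0 (C - k * ((Real.exp (l*x) - Real.exp (l*x₀)) /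
            (T ^ (1/(m+1)) * l ^ (2/(m+1))))^2)) ^ (1/(m-1)) := by rw [hpdef]
    have htend : Tendsto (fun x : ℝ => c₂ * Real.exp (-x/(3*m+1))) atBot atTop := by
      apply Tendsto.const_mul_atTop hc20
      apply Real.tendsto_exp_atTop.comp
      exact (tendsto_neg_atBot_atTop).atTop_div_const hm3
    apply tendsto_atTop_mono' atBot ?_ htend
    filter_upwards [eventually_lt_atBot x₀] with x hx using hlow x hx
end

section
/- Let m > 1, 0 < K < 1/4, λ₁ = (−1−√(1−4K))/2, λ₂ = (−1+√(1−4K))/2, λ = λ₂ − λ₁ = √(1−4K), and let γ = (1/2)·[ (3m+1)/m − (m−1)/(m√(1−4K)) ]. Set α = (1−γ)/(m+1−mγ), β = 1/(m+1−mγ), k = (m−1)/( m(2−γ)(m+1−mγ) ), and let C > 0. Define u(x,t) = λ^{−2α} · t^{−α} · e^{λ₁ x/m} · ( C − k·( e^{λx} · t^{−β} · λ^{−2β} )^{2−γ} )^{1/(m−1)}. Then at every point (x,t) with t > 0 and C − k·( e^{λx} t^{−β} λ^{−2β} )^{2−γ} > 0, the function u satisfies u_t = (u^m)_{xx} + (u^m)_x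 + K·u^m. -/
open Real Set

set_option maxHeartbeats 1000000 in
/-- the explicit Barenblatt-type function
`u(x,t) = λ^{-2α} t^{-α} e^{λ₁x/m} (C - k(e^{λx} t^{-β} λ^{-2β})^{2-γ})^{1/(m-1)}`
satisfies `u_t = (u^m)_{xx} + (u^m)_x + K u^m` at every point where `t > 0` and the
parenthesis is positive; here `0 < K < 1/4` and `γ, α, β, k` are as in the
transformation of the Barenblatt solution of `y^{-γ} θ_τ = (θ^m)_{yy}`. -/
theorem stmt13
    (m K : ℝ) (hm : 1 < m) (hK0 : 0 < K) (hK : K < 1/4)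
    (l₁ l₂ l : ℝ)
    (hl₁ : l₁ = (-1 - Real.sqrt (1 - 4*K))/2)
    (hl₂ : l₂ = (-1 + Real.sqrt (1 - 4*K))/2)
    (hl : l = l₂ - l₁)
    (γ : ℝ) (hγ : γ = (1/2) * ((3*m+1)/m - (m-1)/(m * Real.sqrt (1 - 4*K))))
    (α β k : ℝ)
    (hα : α = (1-γ)/(m+1-m*γ))
    (hβ : β = 1/(m+1-m*γ))
    (hk : k = (m-1)/(m*(2-γ)*(m+1-m*γ)))
    (C : ℝ) (hC : 0 < C)
    (u : ℝ → ℝ → ℝ)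
    (hu : ∀ x t : ℝ, u x t =
      l ^ (-(2*α)) * t ^ (-α) * Real.exp (l₁*x/m) *
        (C - k * (Real.exp (l*x) * t ^ (-β) * l ^ (-(2*β))) ^ (2-γ)) ^ (1/(m-1))) :
    ∀ x t : ℝ, 0 < t →
      0 < C - k * (Real.exp (l*x) * t ^ (-β) * l ^ (-(2*β))) ^ (2-γ) →
      deriv (fun s => u x s) t =
        deriv (deriv (fun z => u z t ^ m)) x
          + deriv (fun z => u z t ^ m) x + K * u x t ^ m := by
  -- scalar preliminaries
  have hm0 : (0:ℝ) < m := by linarith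
  have hm1 : (0:ℝ) < m - 1 := by linarith
  have hlL : l = Real.sqrt (1 - 4*K) := by rw [hl, hl₂, hl₁]; ring
  have hl0 : 0 < l := by rw [hlL]; exact Real.sqrt_pos.mpr (by linarith)
  have hll : l * l = 1 - 4*K := by rw [hlL]; exact Real.mul_self_sqrt (by linarith)
  have hl1 : l < 1 := by nlinarith
  have hl₁' : l₁ = (-1 - l)/2 := by rw [hl₁, ← hlL]
  have hγl : γ = (1/2) * ((3*m+1)/m - (m-1)/(m * l)) := by rw [hγ, ← hlL]
  have hγ' : γ * (2*m*l) = (3*m+1)*l - (m-1) := by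
    rw [hγl]; field_simp
  have key1 : (2*m*l) * (2-γ) = (m-1)*(l+1) := by linear_combination -hγ'
  have key2 : (2*l) * (m+1-m*γ) = (m-1)*(1-l) := by linear_combination -hγ'
  have h2γ : 0 < 2 - γ := by
    nlinarith [key1, mul_pos hm1 (show (0:ℝ) < l + 1 by linarith), mul_pos hm0 hl0]
  have hden : 0 < m+1-m*γ := by
    nlinarith [key2, mul_pos hm1 (show (0:ℝ) < 1 - l by linarith), hl0]
  have hd'' : α*(m-1) + β*(2-γ) = 1 := by
    rw [hα, hβ, div_mul_eq_mul_div, div_mul_eq_mul_div, ← add_div, div_eq_one_iff_eq hden.ne']; ring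
  have hroot : l₁*l₁ + l₁ + K = 0 := by rw [hl₁']; linear_combination (1/4) * hll
  have hsum : 2*l₁ + 1 = -l := by rw [hl₁']; ring
  have hcx : l₁/m = l₁ + l*(2-γ) := by
    rw [hl₁']; field_simp; linear_combination hγ'
  have hcoef1 : l*l*(-α) = -((2*l₁+1) + (2-γ)*l) * ((1/(m-1)+1) * (k*((2-γ)*l))) := by
    rw [hsum, hα, hk]; field_simp; ring
  have hcoef2 : l*l*((1/(m-1))*(k*((2-γ)*β))) =
      (1/(m-1)+1)*(k*(2-γ)*l)*((1/(m-1))*(k*(2-γ)*l)) := by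
    rw [hβ, hk]; field_simp; ring
  have hq0 : m/(m-1) = 1/(m-1) + 1 := by field_simp; ring
  have hq0' : m/(m-1) - 1 = 1/(m-1) := by field_simp; ring
  intro x t ht hp
  have hS0 : (0:ℝ) < Real.exp (l*x) * t ^ (-β) * l ^ (-(2*β)) :=
    mul_pos (mul_pos (Real.exp_pos _) (Real.rpow_pos_of_pos ht _))
      (Real.rpow_pos_of_pos hl0 _)
  -- Key exponential identity
  have hl2 : l ^ (2:ℝ) = l * l := by
    rw [show (2:ℝ) = ((2:ℕ):ℝ) by norm_num, Real.rpow_natCast]; ring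
  have hKey : l ^ (-(2*α)) * Real.exp (l₁*x/m) * t ^ (-α) * t⁻¹
      = l * l * (l ^ (-(2*α*m)) * t ^ (-(α*m)) * Real.exp (l₁*x)) *
        (Real.exp (l*x) * t ^ (-β) * l ^ (-(2*β))) ^ (2-γ) := by
    rw [← hl2]
    rw [Real.mul_rpow (mul_nonneg (Real.exp_pos _).le (Real.rpow_pos_of_pos ht _).le)
          (Real.rpow_pos_of_pos hl0 _).le,
        Real.mul_rpow (Real.exp_pos _).le (Real.rpow_pos_of_pos ht _).le,
        ← Real.rpow_mul ht.le, ← Real.rpow_mul hl0.le,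
        ← Real.rpow_neg_one t]
    simp only [Real.rpow_def_of_pos ht, Real.rpow_def_of_pos hl0,
      Real.rpow_def_of_pos (Real.exp_pos (l*x)), Real.log_exp, ← Real.exp_add]
    rw [Real.exp_eq_exp]
    linear_combination (Real.log t + 2*Real.log l) * hd'' + x * hcx
  -- time derivative
  have hFt : (fun s => u x s) = fun s : ℝ =>
      l ^ (-(2*α)) * s ^ (-α) * Real.exp (l₁*x/m) *
        (C - k * (Real.exp (l*x) * s ^ (-β) * l ^ (-(2*β))) ^ (2-γ)) ^ (1/(m-1)) :=
    funext fun s => hu x s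
  have h_tb : HasDerivAt (fun s : ℝ => s ^ (-β)) ((-β) * t ^ (-β - 1)) t :=
    Real.hasDerivAt_rpow_const (Or.inl ht.ne')
  have h_St : HasDerivAt (fun s : ℝ => Real.exp (l*x) * s ^ (-β) * l ^ (-(2*β)))
      (Real.exp (l*x) * ((-β) * t ^ (-β - 1)) * l ^ (-(2*β))) t :=
    (h_tb.const_mul _).mul_const _
  have h_Pt : HasDerivAt
      (fun s : ℝ => C - k * (Real.exp (l*x) * s ^ (-β) * l ^ (-(2*β))) ^ (2-γ))
      (-(k * (Real.exp (l*x) * ((-β) * t ^ (-β - 1)) * l ^ (-(2*β)) * (2-γ) *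
        (Real.exp (l*x) * t ^ (-β) * l ^ (-(2*β))) ^ (2-γ-1)))) t :=
    ((h_St.rpow_const (Or.inl hS0.ne')).const_mul k).const_sub C
  have h_ct : HasDerivAt (fun s : ℝ => l ^ (-(2*α)) * s ^ (-α))
      (l ^ (-(2*α)) * ((-α) * t ^ (-α - 1))) t :=
    (Real.hasDerivAt_rpow_const (Or.inl ht.ne')).const_mul _
  have h_ut : HasDerivAt (fun s : ℝ =>
      l ^ (-(2*α)) * s ^ (-α) * Real.exp (l₁*x/m) *
        (C - k * (Real.exp (l*x) * s ^ (-β) * l ^ (-(2*β))) ^ (2-γ)) ^ (1/(m-1)))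
      (l ^ (-(2*α)) * ((-α) * t ^ (-α - 1)) * Real.exp (l₁*x/m) *
        (C - k * (Real.exp (l*x) * t ^ (-β) * l ^ (-(2*β))) ^ (2-γ)) ^ (1/(m-1))
      + l ^ (-(2*α)) * t ^ (-α) * Real.exp (l₁*x/m) *
        (-(k * (Real.exp (l*x) * ((-β) * t ^ (-β - 1)) * l ^ (-(2*β)) * (2-γ) *
            (Real.exp (l*x) * t ^ (-β) * l ^ (-(2*β))) ^ (2-γ-1))) * (1/(m-1)) *
          (C - k * (Real.exp (l*x) * t ^ (-β) * l ^ (-(2*β))) ^ (2-γ)) ^ (1/(m-1)-1))) t :=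
    (h_ct.mul_const (Real.exp (l₁*x/m))).mul (h_Pt.rpow_const (Or.inl hp.ne'))
  have hLnice : deriv (fun s => u x s) t =
      l ^ (-(2*α)) * Real.exp (l₁*x/m) * t ^ (-α) * t⁻¹ *
        ((-α) * (C - k * (Real.exp (l*x) * t ^ (-β) * l ^ (-(2*β))) ^ (2-γ)) ^ (1/(m-1))
          + (1/(m-1)) * (k*((2-γ)*β)) *
            ((Real.exp (l*x) * t ^ (-β) * l ^ (-(2*β))) ^ (2-γ) *
              (C - k * (Real.exp (l*x) * t ^ (-β) * l ^ (-(2*β))) ^ (2-γ)) ^ (1/(m-1)) /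
              (C - k * (Real.exp (l*x) * t ^ (-β) * l ^ (-(2*β))) ^ (2-γ)))) := by
    rw [hFt, h_ut.deriv]
    rw [Real.rpow_sub ht (-α) 1, Real.rpow_sub ht (-β) 1,
        Real.rpow_sub hS0 (2-γ) 1, Real.rpow_sub hp (1/(m-1)) 1, Real.rpow_one]
    simp only [Real.rpow_one]
    field_simp [ht.ne', hp.ne', hS0.ne']
  -- equality with V on positivity set
  have hUV : ∀ z : ℝ, 0 < C - k * (Real.exp (l*z) * t ^ (-β) * l ^ (-(2*β))) ^ (2-γ) →
      u z t ^ m = l ^ (-(2*α*m)) * t ^ (-(α*m)) * Real.exp (l₁*z) *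
        (C - k * (Real.exp (l*z) * t ^ (-β) * l ^ (-(2*β))) ^ (2-γ)) ^ (m/(m-1)) := by
    intro z hz
    rw [hu z t]
    rw [Real.mul_rpow (by positivity) (Real.rpow_nonneg hz.le _),
        Real.mul_rpow (by positivity) (Real.exp_pos _).le,
        Real.mul_rpow (Real.rpow_pos_of_pos hl0 _).le (Real.rpow_pos_of_pos ht _).le,
        ← Real.rpow_mul hl0.le, ← Real.rpow_mul ht.le, ← Real.rpow_mul hz.le,
        Real.rpow_def_of_pos (Real.exp_pos _) m, Real.log_exp]
    rw [show (-(2*α))*m = -(2*α*m) by ring, show (-α)*m = -(α*m) by ring,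
        show l₁*z/m*m = l₁*z by field_simp, show (1/(m-1))*m = m/(m-1) by ring]
  -- eventual positivity and eventual equality
  have hScont : ContinuousAt (fun z : ℝ => Real.exp (l*z) * t ^ (-β) * l ^ (-(2*β))) x :=
    (((Real.continuous_exp.comp (continuous_const.mul continuous_id)).continuousAt).mul
      continuousAt_const).mul continuousAt_const
  have hPcont : ContinuousAt
      (fun z : ℝ => C - k * (Real.exp (l*z) * t ^ (-β) * l ^ (-(2*β))) ^ (2-γ)) x :=
    continuousAt_const.sub (continuousAt_const.mul (hScont.rpow_const (Or.inl hS0.ne')))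
  have hPev : ∀ᶠ z in nhds x,
      0 < C - k * (Real.exp (l*z) * t ^ (-β) * l ^ (-(2*β))) ^ (2-γ) := by
    have := hPcont.eventually_mem (Ioi_mem_nhds hp)
    exact this.mono fun z hz => mem_Ioi.mp hz
  have hFV : (fun z => u z t ^ m) =ᶠ[nhds x] (fun z : ℝ =>
      l ^ (-(2*α*m)) * t ^ (-(α*m)) * Real.exp (l₁*z) *
        (C - k * (Real.exp (l*z) * t ^ (-β) * l ^ (-(2*β))) ^ (2-γ)) ^ (m/(m-1))) :=
    hPev.mono fun z hz => hUV z hz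
  -- derivative of V on the positivity set
  have hVd : ∀ z : ℝ, 0 < C - k * (Real.exp (l*z) * t ^ (-β) * l ^ (-(2*β))) ^ (2-γ) →
      HasDerivAt (fun w : ℝ =>
        l ^ (-(2*α*m)) * t ^ (-(α*m)) * Real.exp (l₁*w) *
          (C - k * (Real.exp (l*w) * t ^ (-β) * l ^ (-(2*β))) ^ (2-γ)) ^ (m/(m-1)))
        (l ^ (-(2*α*m)) * t ^ (-(α*m)) * Real.exp (l₁*z) *
          (l₁ * (C - k * (Real.exp (l*z) * t ^ (-β) * l ^ (-(2*β))) ^ (2-γ)) ^ (m/(m-1))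
           - (m/(m-1)) * (k*((2-γ)*l)) *
              ((Real.exp (l*z) * t ^ (-β) * l ^ (-(2*β))) ^ (2-γ) *
               (C - k * (Real.exp (l*z) * t ^ (-β) * l ^ (-(2*β))) ^ (2-γ)) ^ (1/(m-1))))) z := by
    intro z hz
    have hSz : (0:ℝ) < Real.exp (l*z) * t ^ (-β) * l ^ (-(2*β)) :=
      mul_pos (mul_pos (Real.exp_pos _) (Real.rpow_pos_of_pos ht _))
        (Real.rpow_pos_of_pos hl0 _)
    have hlin : HasDerivAt (fun w : ℝ => l * w) l z := by
      simpa using (hasDerivAt_id z).const_mul l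
    have hexp : HasDerivAt (fun w : ℝ => Real.exp (l*w)) (Real.exp (l*z) * l) z := hlin.exp
    have hSd : HasDerivAt (fun w : ℝ => Real.exp (l*w) * t ^ (-β) * l ^ (-(2*β)))
        (Real.exp (l*z) * l * t ^ (-β) * l ^ (-(2*β))) z := (hexp.mul_const _).mul_const _
    have hPd : HasDerivAt
        (fun w : ℝ => C - k * (Real.exp (l*w) * t ^ (-β) * l ^ (-(2*β))) ^ (2-γ))
        (-(k * (Real.exp (l*z) * l * t ^ (-β) * l ^ (-(2*β)) * (2-γ) *
          (Real.exp (l*z) * t ^ (-β) * l ^ (-(2*β))) ^ (2-γ-1)))) z :=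
      ((hSd.rpow_const (Or.inl hSz.ne')).const_mul k).const_sub C
    have hlin1 : HasDerivAt (fun w : ℝ => l₁ * w) l₁ z := by
      simpa using (hasDerivAt_id z).const_mul l₁
    have hexp1 : HasDerivAt (fun w : ℝ => Real.exp (l₁*w)) (Real.exp (l₁*z) * l₁) z :=
      hlin1.exp
    have hG : HasDerivAt (fun w : ℝ => l ^ (-(2*α*m)) * t ^ (-(α*m)) * Real.exp (l₁*w))
        (l ^ (-(2*α*m)) * t ^ (-(α*m)) * (Real.exp (l₁*z) * l₁)) z := by
      simpa [mul_assoc] using hexp1.const_mul (l ^ (-(2*α*m)) * t ^ (-(α*m)))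
    have hV := hG.mul (hPd.rpow_const (p := m/(m-1)) (Or.inl hz.ne'))
    refine hV.congr_deriv ?_
    rw [Real.rpow_sub hSz (2-γ) 1, hq0', Real.rpow_one]
    field_simp [hSz.ne']
    ring
  -- first space derivative
  have hd1 : deriv (fun z => u z t ^ m) x =
      l ^ (-(2*α*m)) * t ^ (-(α*m)) * Real.exp (l₁*x) *
        (l₁ * (C - k * (Real.exp (l*x) * t ^ (-β) * l ^ (-(2*β))) ^ (2-γ)) ^ (m/(m-1))
         - (m/(m-1)) * (k*((2-γ)*l)) *
            ((Real.exp (l*x) * t ^ (-β) * l ^ (-(2*β))) ^ (2-γ) *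
             (C - k * (Real.exp (l*x) * t ^ (-β) * l ^ (-(2*β))) ^ (2-γ)) ^ (1/(m-1)))) :=
    hFV.deriv_eq.trans (hVd x hp).deriv
  -- second space derivative
  have hDD : deriv (fun z => u z t ^ m) =ᶠ[nhds x] (fun z : ℝ =>
      l ^ (-(2*α*m)) * t ^ (-(α*m)) * Real.exp (l₁*z) *
        (l₁ * (C - k * (Real.exp (l*z) * t ^ (-β) * l ^ (-(2*β))) ^ (2-γ)) ^ (m/(m-1))
         - (m/(m-1)) * (k*((2-γ)*l)) *
            ((Real.exp (l*z) * t ^ (-β) * l ^ (-(2*β))) ^ (2-γ) *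
             (C - k * (Real.exp (l*z) * t ^ (-β) * l ^ (-(2*β))) ^ (2-γ)) ^ (1/(m-1))))) :=
    hFV.deriv.trans (hPev.mono fun z hz => (hVd z hz).deriv)
  have hD2 : HasDerivAt (fun z : ℝ =>
      l ^ (-(2*α*m)) * t ^ (-(α*m)) * Real.exp (l₁*z) *
        (l₁ * (C - k * (Real.exp (l*z) * t ^ (-β) * l ^ (-(2*β))) ^ (2-γ)) ^ (m/(m-1))
         - (m/(m-1)) * (k*((2-γ)*l)) *
            ((Real.exp (l*z) * t ^ (-β) * l ^ (-(2*β))) ^ (2-γ) *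
             (C - k * (Real.exp (l*z) * t ^ (-β) * l ^ (-(2*β))) ^ (2-γ)) ^ (1/(m-1)))))
      (l ^ (-(2*α*m)) * t ^ (-(α*m)) * Real.exp (l₁*x) *
        (l₁*l₁ * ((C - k * (Real.exp (l*x) * t ^ (-β) * l ^ (-(2*β))) ^ (2-γ)) ^ (1/(m-1)) *
            (C - k * (Real.exp (l*x) * t ^ (-β) * l ^ (-(2*β))) ^ (2-γ)))
         - (2*l₁ + (2-γ)*l) * ((m/(m-1)) * (k*((2-γ)*l))) *
            ((Real.exp (l*x) * t ^ (-β) * l ^ (-(2*β))) ^ (2-γ) *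
             (C - k * (Real.exp (l*x) * t ^ (-β) * l ^ (-(2*β))) ^ (2-γ)) ^ (1/(m-1)))
         + (m/(m-1)) * (k*((2-γ)*l)) * ((1/(m-1)) * (k*((2-γ)*l))) *
            ((Real.exp (l*x) * t ^ (-β) * l ^ (-(2*β))) ^ (2-γ) *
             (Real.exp (l*x) * t ^ (-β) * l ^ (-(2*β))) ^ (2-γ) *
             ((C - k * (Real.exp (l*x) * t ^ (-β) * l ^ (-(2*β))) ^ (2-γ)) ^ (1/(m-1)) /
              (C - k * (Real.exp (l*x) * t ^ (-β) * l ^ (-(2*β))) ^ (2-γ)))))) x := by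
    have hlin : HasDerivAt (fun w : ℝ => l * w) l x := by
      simpa using (hasDerivAt_id x).const_mul l
    have hexp : HasDerivAt (fun w : ℝ => Real.exp (l*w)) (Real.exp (l*x) * l) x := hlin.exp
    have hSd : HasDerivAt (fun w : ℝ => Real.exp (l*w) * t ^ (-β) * l ^ (-(2*β)))
        (Real.exp (l*x) * l * t ^ (-β) * l ^ (-(2*β))) x := (hexp.mul_const _).mul_const _
    have hPd : HasDerivAt
        (fun w : ℝ => C - k * (Real.exp (l*w) * t ^ (-β) * l ^ (-(2*β))) ^ (2-γ))
        (-(k * (Real.exp (l*x) * l * t ^ (-β) * l ^ (-(2*β)) * (2-γ) *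
          (Real.exp (l*x) * t ^ (-β) * l ^ (-(2*β))) ^ (2-γ-1)))) x :=
      ((hSd.rpow_const (Or.inl hS0.ne')).const_mul k).const_sub C
    have hlin1 : HasDerivAt (fun w : ℝ => l₁ * w) l₁ x := by
      simpa using (hasDerivAt_id x).const_mul l₁
    have hexp1 : HasDerivAt (fun w : ℝ => Real.exp (l₁*w)) (Real.exp (l₁*x) * l₁) x :=
      hlin1.exp
    have hG : HasDerivAt (fun w : ℝ => l ^ (-(2*α*m)) * t ^ (-(α*m)) * Real.exp (l₁*w))
        (l ^ (-(2*α*m)) * t ^ (-(α*m)) * (Real.exp (l₁*x) * l₁)) x := by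
      simpa [mul_assoc] using hexp1.const_mul (l ^ (-(2*α*m)) * t ^ (-(α*m)))
    have hE := hSd.rpow_const (p := 2-γ) (Or.inl hS0.ne')
    have hRq := hPd.rpow_const (p := m/(m-1)) (Or.inl hp.ne')
    have hRr := hPd.rpow_const (p := 1/(m-1)) (Or.inl hp.ne')
    have hH := (hRq.const_mul l₁).sub ((hE.mul hRr).const_mul ((m/(m-1)) * (k*((2-γ)*l))))
    have hVV := hG.mul hH
    refine hVV.congr_deriv ?_
    simp only [Pi.sub_apply, Pi.mul_apply]
    rw [Real.rpow_sub hS0 (2-γ) 1, hq0', Real.rpow_sub hp (1/(m-1)) 1, Real.rpow_one]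
    rw [hq0, Real.rpow_add hp, Real.rpow_one]
    field_simp [hS0.ne', hp.ne']
    ring
  have hd2 : deriv (deriv (fun z => u z t ^ m)) x =
      l ^ (-(2*α*m)) * t ^ (-(α*m)) * Real.exp (l₁*x) *
        (l₁*l₁ * ((C - k * (Real.exp (l*x) * t ^ (-β) * l ^ (-(2*β))) ^ (2-γ)) ^ (1/(m-1)) *
            (C - k * (Real.exp (l*x) * t ^ (-β) * l ^ (-(2*β))) ^ (2-γ)))
         - (2*l₁ + (2-γ)*l) * ((m/(m-1)) * (k*((2-γ)*l))) *
            ((Real.exp (l*x) * t ^ (-β) * l ^ (-(2*β))) ^ (2-γ) *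
             (C - k * (Real.exp (l*x) * t ^ (-β) * l ^ (-(2*β))) ^ (2-γ)) ^ (1/(m-1)))
         + (m/(m-1)) * (k*((2-γ)*l)) * ((1/(m-1)) * (k*((2-γ)*l))) *
            ((Real.exp (l*x) * t ^ (-β) * l ^ (-(2*β))) ^ (2-γ) *
             (Real.exp (l*x) * t ^ (-β) * l ^ (-(2*β))) ^ (2-γ) *
             ((C - k * (Real.exp (l*x) * t ^ (-β) * l ^ (-(2*β))) ^ (2-γ)) ^ (1/(m-1)) /
              (C - k * (Real.exp (l*x) * t ^ (-β) * l ^ (-(2*β))) ^ (2-γ))))) :=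
    hDD.deriv_eq.trans hD2.deriv
  rw [hLnice, hd2, hd1, hUV x hp]
  rw [hq0, Real.rpow_add hp, Real.rpow_one]
  linear_combination
    ((-α) * (C - k * (Real.exp (l*x) * t ^ (-β) * l ^ (-(2*β))) ^ (2-γ)) ^ (1/(m-1))
      + (1/(m-1)) * (k*((2-γ)*β)) *
        ((Real.exp (l*x) * t ^ (-β) * l ^ (-(2*β))) ^ (2-γ) *
         (C - k * (Real.exp (l*x) * t ^ (-β) * l ^ (-(2*β))) ^ (2-γ)) ^ (1/(m-1)) /
         (C - k * (Real.exp (l*x) * t ^ (-β) * l ^ (-(2*β))) ^ (2-γ)))) * hKey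
    + (l ^ (-(2*α*m)) * t ^ (-(α*m)) * Real.exp (l₁*x) *
        (Real.exp (l*x) * t ^ (-β) * l ^ (-(2*β))) ^ (2-γ) *
        (C - k * (Real.exp (l*x) * t ^ (-β) * l ^ (-(2*β))) ^ (2-γ)) ^ (1/(m-1))) * hcoef1
    + (l ^ (-(2*α*m)) * t ^ (-(α*m)) * Real.exp (l₁*x) *
        (Real.exp (l*x) * t ^ (-β) * l ^ (-(2*β))) ^ (2-γ) *
        (Real.exp (l*x) * t ^ (-β) * l ^ (-(2*β))) ^ (2-γ) *
        (C - k * (Real.exp (l*x) * t ^ (-β) * l ^ (-(2*β))) ^ (2-γ)) ^ (1/(m-1)) /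
        (C - k * (Real.exp (l*x) * t ^ (-β) * l ^ (-(2*β))) ^ (2-γ))) * hcoef2
    - (l ^ (-(2*α*m)) * t ^ (-(α*m)) * Real.exp (l₁*x) *
        ((C - k * (Real.exp (l*x) * t ^ (-β) * l ^ (-(2*β))) ^ (2-γ)) ^ (1/(m-1)) *
         (C - k * (Real.exp (l*x) * t ^ (-β) * l ^ (-(2*β))) ^ (2-γ)))) * hroot
end
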